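/- arXiv:1409.5699 — 3 statements merged into one kernel-verified Lean document; each statement's English description precedes it below -/
import Mathlib

section
/- Kripke completeness of LC: the theory LC is sound and complete with respect to finite perfect Kripke models with tree frames, i.e. for every modal proposition A, LC ⊢ A if and only if A is forced at every node of every finite perfect Kripke model with a tree frame. -/
namespace PLHA

/-! ## Modal propositional language -/

/-- Modal propositional formulas: atomic variables, ⊥, ∧, ∨, →, □. -/
inductive Form : Type
  | var : ℕ → Form
  | bot : Form
  | and : Form → Form → Form
  | or  : Form → Form → Form
  | imp : Form → Form → Form
  | box : Form → Form
  deriving DecidableEq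

namespace Form

/-- ⊤ -/
def top : Form := imp bot bot

/-- A ↔ B -/
def iffF (A B : Form) : Form := and (imp A B) (imp B A)

/-- ⊡A := A ∧ □A -/
def boxdot (A : Form) : Form := and A (box A)

/-- `A ∈ NOI`: every occurrence of → is in the scope of some □. -/
def noi : Form → Bool
  | var _ => true
  | bot => true
  | and A B => noi A && noi B
  | or A B => noi A && noi B
  | imp _ _ => false
  | box _ => true

/-- The Leivant translation `A^l`. -/
def lev : Form → Form
  | var n => var n
  | bot => bot
  | and A B => and (lev A) (lev B)
  | or A B => or (boxdot (lev A)) (boxdot (lev B))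
  | imp A B => if noi A then imp A (lev B) else imp A B
  | box A => box A

/-- atomic propositions: atomic variables and ⊥. -/
def isAtom (A : Form) : Prop := (∃ n, A = var n) ∨ A = bot

/-- boxed propositions. -/
def isBoxed (A : Form) : Prop := ∃ B, A = box B

/-- non-modal (□-free) propositions. -/
def boxFree : Form → Bool
  | var _ => true
  | bot => true
  | and A B => boxFree A && boxFree B
  | or A B => boxFree A && boxFree B
  | imp A B => boxFree A && boxFree B
  | box _ => false

/-- A bound on the indices of the variables occurring in a formula. -/
def fvb : Form → ℕ
  | var n => n + 1
  | bot => 0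
  | and A B => max (fvb A) (fvb B)
  | or A B => max (fvb A) (fvb B)
  | imp A B => max (fvb A) (fvb B)
  | box A => fvb A

/-- maximal nesting depth of boxes. -/
def bdep : Form → ℕ
  | var _ => 0
  | bot => 0
  | and A B => max (bdep A) (bdep B)
  | or A B => max (bdep A) (bdep B)
  | imp A B => max (bdep A) (bdep B)
  | box A => bdep A + 1

/-- the complexity measure ρ used to define NNIL. -/
def rho : Form → ℕ
  | var _ => 0
  | bot => 0
  | and A B => max (rho A) (rho B)
  | or A B => max (rho A) (rho B)
  | imp A B => max (rho A + 1) (rho B)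
  | box _ => 0

end Form

/-- NNIL: no nested implications to the left. -/
def NNILc (A : Form) : Prop := Form.rho A ≤ 1

/-- TNNIL: thoroughly NNIL propositions. -/
inductive TNNIL : Form → Prop
  | var (n : ℕ) : TNNIL (.var n)
  | bot : TNNIL .bot
  | and {A B} : TNNIL A → TNNIL B → TNNIL (.and A B)
  | or {A B} : TNNIL A → TNNIL B → TNNIL (.or A B)
  | box {A} : TNNIL A → TNNIL (.box A)
  | imp {A B} : A.noi = true → TNNIL A → TNNIL B → TNNIL (.imp A B)

/-- TNNIL⁻: propositions of the form B(□C₁,…,□Cₙ) with B non-modal and Cᵢ ∈ TNNIL. -/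
inductive TNNILminus : Form → Prop
  | var (n : ℕ) : TNNILminus (.var n)
  | bot : TNNILminus .bot
  | box {A} : TNNIL A → TNNILminus (.box A)
  | and {A B} : TNNILminus A → TNNILminus B → TNNILminus (.and A B)
  | or {A B} : TNNILminus A → TNNILminus B → TNNILminus (.or A B)
  | imp {A B} : TNNILminus A → TNNILminus B → TNNILminus (.imp A B)

/-! ## Proof systems -/

/-- Hilbert-style axioms of intuitionistic propositional logic (over the modal language). -/
inductive IpcAx : Form → Prop
  | a1 (A B) : IpcAx (.imp A (.imp B A))
  | a2 (A B C) : IpcAx (.imp (.imp A (.imp B C)) (.imp (.imp A B) (.imp A C)))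
  | a3 (A B) : IpcAx (.imp A (.imp B (.and A B)))
  | a4 (A B) : IpcAx (.imp (.and A B) A)
  | a5 (A B) : IpcAx (.imp (.and A B) B)
  | a6 (A B) : IpcAx (.imp A (.or A B))
  | a7 (A B) : IpcAx (.imp B (.or A B))
  | a8 (A B C) : IpcAx (.imp (.imp A C) (.imp (.imp B C) (.imp (.or A B) C)))
  | a9 (A) : IpcAx (.imp .bot A)

/-- Derivability from IPC axioms together with extra axioms `Ax`, modus ponens,
and (if `useNec = true`) the necessitation rule. -/
inductive Proves (Ax : Form → Prop) (useNec : Bool) : Form → Prop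
  | ax {A} : Ax A → Proves Ax useNec A
  | ipc {A} : IpcAx A → Proves Ax useNec A
  | mp {A B} : Proves Ax useNec (.imp A B) → Proves Ax useNec A → Proves Ax useNec B
  | nec {A} : useNec = true → Proves Ax useNec A → Proves Ax useNec (.box A)

/-- K and 4 axiom schemas. -/
inductive K4Ax : Form → Prop
  | k (A B) : K4Ax (.imp (.box (.imp A B)) (.imp (.box A) (.box B)))
  | four (A) : K4Ax (.imp (.box A) (.box (.box A)))

/-- K, 4, and Löb's axiom schemas. -/
inductive GLAx : Form → Prop
  | k (A B) : GLAx (.imp (.box (.imp A B)) (.imp (.box A) (.box B)))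
  | four (A) : GLAx (.imp (.box A) (.box (.box A)))
  | lob (A) : GLAx (.imp (.box (.imp (.box A) A)) (.box A))

/-- IPC_□ : intuitionistic propositional logic over the modal language. -/
def IPCbProves : Form → Prop := Proves (fun _ => False) false

/-- iK4. -/
def iK4Proves : Form → Prop := Proves K4Ax true

/-- iGL. -/
def iGLProves : Form → Prop := Proves GLAx true

/-- the completeness principle CP : A → □A. -/
def CPAx : Form → Prop := fun F => ∃ A : Form, F = .imp A (.box A)

/-- LC := iGL + CP. -/
def LCProves : Form → Prop := Proves (fun F => GLAx F ∨ CPAx F) true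

/-- CP restricted to atomic propositions. -/
def CPaAx : Form → Prop := fun F => ∃ A : Form, A.isAtom ∧ F = .imp A (.box A)

/-- the extended Leivant principle Le⁺ : □A → □A^l. -/
def LeplusAx : Form → Prop := fun F => ∃ A : Form, F = .imp (.box A) (.box A.lev)

/-- LLe⁺ := iGL + Le⁺ + CP_a. -/
def LLeplusProves : Form → Prop := Proves (fun F => GLAx F ∨ LeplusAx F ∨ CPaAx F) true

/-! ## The preservativity relation ▶ -/

/-- the bracket operation [A]B. -/
def bracket (A : Form) : Form → Form
  | .and B C => .and (bracket A B) (bracket A C)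
  | .or B C => .or (bracket A B) (bracket A C)
  | .imp B C => .imp A (.imp B C)
  | B => B

def listConj : List Form → Form
  | [] => Form.top
  | [A] => A
  | A :: l => .and A (listConj l)

def listDisj : List Form → Form
  | [] => Form.bot
  | [A] => A
  | A :: l => .or A (listDisj l)

/-- the relation ▶ : the smallest relation satisfying A1–A4 and B1–B3.
In B2 a (finite) set of implications is represented by a list `X` of pairs `(E, F)`
standing for the implications `E → F`. -/
inductive Pres : Form → Form → Prop
  | a1 {A B} : iK4Proves (.imp A B) → Pres A B
  | a2 {A B C} : Pres A B → Pres B C → Pres A C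
  | a3 {A B C} : Pres C A → Pres C B → Pres C (.and A B)
  | a4 {A B} : Pres A B → Pres (.box A) (.box B)
  | b1 {A B C} : Pres A C → Pres B C → Pres (.or A B) C
  | b2 (X : List (Form × Form)) (C : Form) :
      Pres (.imp (listConj (X.map fun p => Form.imp p.1 p.2)) C)
        (listDisj ((X.map Prod.fst ++ [C]).map
          (bracket (listConj (X.map fun p => Form.imp p.1 p.2)))))
  | b3 {A B C} : Pres A B → (C.isAtom ∨ C.isBoxed) → Pres (.imp C A) (.imp C B)

/-- the axioms of H_σ : LLe⁺ + CP_a + {□A→□B : A ▶ B}. -/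
def HsigmaAx : Form → Prop := fun F =>
  GLAx F ∨ LeplusAx F ∨ CPaAx F ∨ ∃ A B : Form, Pres A B ∧ F = .imp (.box A) (.box B)

/-- H_σ. -/
def HsigmaProves : Form → Prop := Proves HsigmaAx true

/-! ## NNIL/TNNIL approximations -/

/-- `star` is (a realization of) Visser's NNIL-algorithm: `star A` is the best NNIL
approximation of `A` from below. -/
def IsNNILApproxOp (star : Form → Form) : Prop :=
  ∀ A : Form, NNILc (star A) ∧ IPCbProves (.imp (star A) A) ∧
    ∀ B : Form, NNILc B → IPCbProves (.imp B A) → IPCbProves (.imp B (star A))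

/-- replace the outermost boxed subformulas of a formula by the fresh variables
`k, k+1, …` (left to right), returning the resulting non-modal skeleton together
with the list of bodies of removed boxes. -/
def strip : Form → ℕ → Form × List Form
  | .var n, _ => (.var n, [])
  | .bot, _ => (.bot, [])
  | .and A B, k =>
      let pa := strip A k
      let pb := strip B (k + pa.2.length)
      (.and pa.1 pb.1, pa.2 ++ pb.2)
  | .or A B, k =>
      let pa := strip A k
      let pb := strip B (k + pa.2.length)
      (.or pa.1 pb.1, pa.2 ++ pb.2)
  | .imp A B, k =>
      let pa := strip A k
      let pb := strip B (k + pa.2.length)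
      (.imp pa.1 pb.1, pa.2 ++ pb.2)
  | .box A, k => (.var k, [A])

/-- simultaneous substitution of formulas for variables. -/
def substF (f : ℕ → Form) : Form → Form
  | .var n => f n
  | .bot => .bot
  | .and A B => .and (substF f A) (substF f B)
  | .or A B => .or (substF f A) (substF f B)
  | .imp A B => .imp (substF f A) (substF f B)
  | .box A => .box (substF f A)

/-- fuelled version of the TNNIL approximation `A⁺`:
`A⁺ := (A')^*[pᵢ | □Bᵢ⁺]` where `A = A'[pᵢ | □Bᵢ]` with `A'` non-modal. -/
def plusAux (star : Form → Form) : ℕ → Form → Form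
  | 0, A => A
  | fuel + 1, A =>
      let k := A.fvb
      let p := strip A k
      substF (fun n =>
        if k ≤ n ∧ n < k + p.2.length then
          .box (plusAux star fuel (p.2.getD (n - k) .bot))
        else .var n) (star p.1)

/-- the TNNIL approximation `A⁺` (relative to a realization `star` of the NNIL-algorithm). -/
def plusF (star : Form → Form) (A : Form) : Form := plusAux star (A.bdep + 1) A

/-- `A⁻`: writing `A = B(□C₁,…,□Cₙ)` with `B` non-modal, `A⁻ := B(□C₁⁺,…,□Cₙ⁺)`. -/
def minusF (star : Form → Form) (A : Form) : Form :=
  let k := A.fvb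
  let p := strip A k
  substF (fun n =>
    if k ≤ n ∧ n < k + p.2.length then
      .box (plusF star (p.2.getD (n - k) .bot))
    else .var n) p.1

/-- the box translation A^□. -/
def boxTr : Form → Form
  | .var n => Form.boxdot (.var n)
  | .bot => Form.boxdot .bot
  | .and A B => .and (boxTr A) (boxTr B)
  | .or A B => .or (boxTr A) (boxTr B)
  | .imp A B => Form.boxdot (.imp (boxTr A) (boxTr B))
  | .box A => .box (boxTr A)

/-- a Gödel numbering of modal formulas. -/
def encodeForm : Form → ℕ
  | .var n => Nat.pair 0 n
  | .bot => Nat.pair 1 0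
  | .and A B => Nat.pair 2 (Nat.pair (encodeForm A) (encodeForm B))
  | .or A B => Nat.pair 3 (Nat.pair (encodeForm A) (encodeForm B))
  | .imp A B => Nat.pair 4 (Nat.pair (encodeForm A) (encodeForm B))
  | .box A => Nat.pair 5 (encodeForm A)

/-! ## Propositional Kripke models -/

/-- Kripke models for intuitionistic modal logic. -/
structure PKripke where
  W : Type
  le : W → W → Prop
  r : W → W → Prop
  V : W → ℕ → Prop
  le_refl : ∀ w, le w w
  le_trans : ∀ {a b c}, le a b → le b c → le a c
  le_antisymm : ∀ {a b}, le a b → le b a → a = b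
  le_r : ∀ {a b c}, le a b → r b c → r a c
  mono : ∀ {a b : W} {n : ℕ}, le a b → V a n → V b n

/-- the forcing relation of a propositional modal Kripke model. -/
def pforces (M : PKripke) : Form → M.W → Prop
  | .var n, w => M.V w n
  | .bot, _ => False
  | .and A B, w => pforces M A w ∧ pforces M B w
  | .or A B, w => pforces M A w ∨ pforces M B w
  | .imp A B, w => ∀ v, M.le w v → pforces M A v → pforces M B v
  | .box A, w => ∀ v, M.r w v → pforces M A v

namespace PKripke

/-- brilliant: (R;≤) ⊆ R. -/
def Brilliant (M : PKripke) : Prop := ∀ {a b c : M.W}, M.r a b → M.le b c → M.r a c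

/-- reverse well-founded: well-founded with respect to R⁻¹. -/
def RevWF (M : PKripke) : Prop := WellFounded (fun a b : M.W => M.r b a)

/-- perfect: brilliant, reverse well-founded, and R ⊆ <. -/
def Perfect (M : PKripke) : Prop :=
  M.Brilliant ∧ M.RevWF ∧ ∀ {a b : M.W}, M.r a b → M.le a b ∧ a ≠ b

/-- the partial order (W,≤) is a tree: it has a root and the set of predecessors
of every node is linearly ordered. -/
def TreeFrame (M : PKripke) : Prop :=
  (∃ root : M.W, ∀ w, M.le root w) ∧
  ∀ w u v : M.W, M.le u w → M.le v w → (M.le u v ∨ M.le v u)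

end PKripke

/-! ## First-order arithmetic -/

/-- terms of the language (S, +, ·, <, 0) (de Bruijn variables). -/
inductive ATerm : Type
  | var : ℕ → ATerm
  | zero : ATerm
  | succ : ATerm → ATerm
  | add : ATerm → ATerm → ATerm
  | mul : ATerm → ATerm → ATerm
  deriving DecidableEq

namespace ATerm

def lift : ATerm → ℕ → ATerm
  | var n, d => if n < d then var n else var (n + 1)
  | zero, _ => zero
  | succ t, d => succ (t.lift d)
  | add t u, d => add (t.lift d) (u.lift d)
  | mul t u, d => mul (t.lift d) (u.lift d)

def subst : ATerm → ℕ → ATerm → ATerm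
  | var n, k, s => if n < k then var n else if n = k then s else var (n - 1)
  | zero, _, _ => zero
  | succ t, k, s => succ (t.subst k s)
  | add t u, k, s => add (t.subst k s) (u.subst k s)
  | mul t u, k, s => mul (t.subst k s) (u.subst k s)

/-- non-binding substitution: replace `var k` by `s`, leaving other variables alone. -/
def substId : ATerm → ℕ → ATerm → ATerm
  | var n, k, s => if n = k then s else var n
  | zero, _, _ => zero
  | succ t, k, s => succ (t.substId k s)
  | add t u, k, s => add (t.substId k s) (u.substId k s)
  | mul t u, k, s => mul (t.substId k s) (u.substId k s)

/-- all variables have index < k. -/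
def vlt : ATerm → ℕ → Prop
  | var n, k => n < k
  | zero, _ => True
  | succ t, k => t.vlt k
  | add t u, k => t.vlt k ∧ u.vlt k
  | mul t u, k => t.vlt k ∧ u.vlt k

/-- evaluation in the standard model ℕ. -/
def evalN : ATerm → (ℕ → ℕ) → ℕ
  | var n, ρ => ρ n
  | zero, _ => 0
  | succ t, ρ => t.evalN ρ + 1
  | add t u, ρ => t.evalN ρ + u.evalN ρ
  | mul t u, ρ => t.evalN ρ * u.evalN ρ

def fvB : ATerm → ℕ
  | var n => n + 1
  | zero => 0
  | succ t => t.fvB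
  | add t u => max t.fvB u.fvB
  | mul t u => max t.fvB u.fvB

/-- a Gödel numbering of terms. -/
def code : ATerm → ℕ
  | var n => Nat.pair 0 n
  | zero => Nat.pair 1 0
  | succ t => Nat.pair 2 t.code
  | add t u => Nat.pair 3 (Nat.pair t.code u.code)
  | mul t u => Nat.pair 4 (Nat.pair t.code u.code)

end ATerm

/-- the numeral of a natural number. -/
def numeral : ℕ → ATerm
  | 0 => .zero
  | n + 1 => .succ (numeral n)

/-- extend an environment by one value at index 0. -/
def econs {α : Sort*} (b : α) (ρ : ℕ → α) : ℕ → α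
  | 0 => b
  | n + 1 => ρ n

/-- first-order formulas of arithmetic (de Bruijn variables). -/
inductive AForm : Type
  | eq : ATerm → ATerm → AForm
  | lt : ATerm → ATerm → AForm
  | fal : AForm
  | and : AForm → AForm → AForm
  | or : AForm → AForm → AForm
  | imp : AForm → AForm → AForm
  | all : AForm → AForm
  | ex : AForm → AForm
  deriving DecidableEq

namespace AForm

def neg (A : AForm) : AForm := imp A fal

def iffA (A B : AForm) : AForm := and (imp A B) (imp B A)

def lift : AForm → ℕ → AForm
  | eq t u, d => eq (t.lift d) (u.lift d)
  | lt t u, d => lt (t.lift d) (u.lift d)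
  | fal, _ => fal
  | and A B, d => and (A.lift d) (B.lift d)
  | or A B, d => or (A.lift d) (B.lift d)
  | imp A B, d => imp (A.lift d) (B.lift d)
  | all A, d => all (A.lift (d + 1))
  | ex A, d => ex (A.lift (d + 1))

/-- capture-avoiding substitution of a term for variable `k` (instantiating a binder). -/
def subst : AForm → ℕ → ATerm → AForm
  | eq t u, k, s => eq (t.subst k s) (u.subst k s)
  | lt t u, k, s => lt (t.subst k s) (u.subst k s)
  | fal, _, _ => fal
  | and A B, k, s => and (A.subst k s) (B.subst k s)
  | or A B, k, s => or (A.subst k s) (B.subst k s)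
  | imp A B, k, s => imp (A.subst k s) (B.subst k s)
  | all A, k, s => all (A.subst (k + 1) (s.lift 0))
  | ex A, k, s => ex (A.subst (k + 1) (s.lift 0))

/-- non-binding substitution: replace the free variable `k` by `s`. -/
def substId : AForm → ℕ → ATerm → AForm
  | eq t u, k, s => eq (t.substId k s) (u.substId k s)
  | lt t u, k, s => lt (t.substId k s) (u.substId k s)
  | fal, _, _ => fal
  | and A B, k, s => and (A.substId k s) (B.substId k s)
  | or A B, k, s => or (A.substId k s) (B.substId k s)
  | imp A B, k, s => imp (A.substId k s) (B.substId k s)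
  | all A, k, s => all (A.substId (k + 1) (s.lift 0))
  | ex A, k, s => ex (A.substId (k + 1) (s.lift 0))

/-- all free variables have index < k. -/
def vlt : AForm → ℕ → Prop
  | eq t u, k => t.vlt k ∧ u.vlt k
  | lt t u, k => t.vlt k ∧ u.vlt k
  | fal, _ => True
  | and A B, k => A.vlt k ∧ B.vlt k
  | or A B, k => A.vlt k ∧ B.vlt k
  | imp A B, k => A.vlt k ∧ B.vlt k
  | all A, k => A.vlt (k + 1)
  | ex A, k => A.vlt (k + 1)

/-- a bound on the free variables of a formula. -/
def fvB : AForm → ℕ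
  | eq t u => max t.fvB u.fvB
  | lt t u => max t.fvB u.fvB
  | fal => 0
  | and A B => max A.fvB B.fvB
  | or A B => max A.fvB B.fvB
  | imp A B => max A.fvB B.fvB
  | all A => A.fvB - 1
  | ex A => A.fvB - 1

/-- classical (Tarskian) satisfaction in the standard model ℕ. -/
def SatN : AForm → (ℕ → ℕ) → Prop
  | eq t u, ρ => t.evalN ρ = u.evalN ρ
  | lt t u, ρ => t.evalN ρ < u.evalN ρ
  | fal, _ => False
  | and A B, ρ => A.SatN ρ ∧ B.SatN ρ
  | or A B, ρ => A.SatN ρ ∨ B.SatN ρ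
  | imp A B, ρ => A.SatN ρ → B.SatN ρ
  | all A, ρ => ∀ n : ℕ, A.SatN (econs n ρ)
  | ex A, ρ => ∃ n : ℕ, A.SatN (econs n ρ)

/-- a Gödel numbering of arithmetic formulas. -/
def code : AForm → ℕ
  | eq t u => Nat.pair 0 (Nat.pair t.code u.code)
  | lt t u => Nat.pair 1 (Nat.pair t.code u.code)
  | fal => Nat.pair 2 0
  | and A B => Nat.pair 3 (Nat.pair A.code B.code)
  | or A B => Nat.pair 4 (Nat.pair A.code B.code)
  | imp A B => Nat.pair 5 (Nat.pair A.code B.code)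
  | all A => Nat.pair 6 A.code
  | ex A => Nat.pair 7 A.code

end AForm

/-- Δ₀ formulas: only bounded quantifiers. -/
inductive Delta0 : AForm → Prop
  | eq (t u) : Delta0 (.eq t u)
  | lt (t u) : Delta0 (.lt t u)
  | fal : Delta0 .fal
  | and {A B} : Delta0 A → Delta0 B → Delta0 (.and A B)
  | or {A B} : Delta0 A → Delta0 B → Delta0 (.or A B)
  | imp {A B} : Delta0 A → Delta0 B → Delta0 (.imp A B)
  | ball (t : ATerm) {A} : Delta0 A → Delta0 (.all (.imp (.lt (.var 0) (t.lift 0)) A))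
  | bex (t : ATerm) {A} : Delta0 A → Delta0 (.ex (.and (.lt (.var 0) (t.lift 0)) A))

/-- Σ₁ formulas: existential quantifiers over a Δ₀ matrix. -/
inductive Sigma1 : AForm → Prop
  | of_delta0 {A} : Delta0 A → Sigma1 A
  | ex {A} : Sigma1 A → Sigma1 (.ex A)

/-- a Hilbert-style proof system for intuitionistic first-order logic with equality,
from a set `T` of (closed) non-logical axioms. -/
inductive Prf (T : AForm → Prop) : AForm → Prop
  | hyp {A} : T A → Prf T A
  | mp {A B} : Prf T (.imp A B) → Prf T A → Prf T B
  | gen {A} : Prf T A → Prf T (.all A)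
  | k (A B) : Prf T (.imp A (.imp B A))
  | s (A B C) : Prf T (.imp (.imp A (.imp B C)) (.imp (.imp A B) (.imp A C)))
  | pair (A B) : Prf T (.imp A (.imp B (.and A B)))
  | fst (A B) : Prf T (.imp (.and A B) A)
  | snd (A B) : Prf T (.imp (.and A B) B)
  | inl (A B) : Prf T (.imp A (.or A B))
  | inr (A B) : Prf T (.imp B (.or A B))
  | cases (A B C) : Prf T (.imp (.imp A C) (.imp (.imp B C) (.imp (.or A B) C)))
  | exfalso (A) : Prf T (.imp .fal A)
  | allE (A : AForm) (t : ATerm) : Prf T (.imp (.all A) (A.subst 0 t))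
  | allShift (A B : AForm) : Prf T (.imp (.all (.imp (B.lift 0) A)) (.imp B (.all A)))
  | exI (A : AForm) (t : ATerm) : Prf T (.imp (A.subst 0 t) (.ex A))
  | exE (A B : AForm) : Prf T (.imp (.all (.imp A (B.lift 0))) (.imp (.ex A) B))
  | eqRefl : Prf T (.all (.eq (.var 0) (.var 0)))
  | leibniz (A : AForm) : Prf T (.all (.all (.imp (.eq (.var 1) (.var 0))
      (.imp (((A.lift 1).lift 1).substId 0 (.var 1))
            (((A.lift 1).lift 1).substId 0 (.var 0))))))

/-- iterated universal quantification. -/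
def ucAux : ℕ → AForm → AForm
  | 0, A => A
  | k + 1, A => ucAux k (.all A)

/-- universal closure. -/
def uc (A : AForm) : AForm := ucAux A.fvB A

/-- the induction axiom for the formula A (induction on variable 0). -/
def indAx (A : AForm) : AForm :=
  uc (.imp (.and (A.subst 0 .zero) (.all (.imp A (A.substId 0 (.succ (.var 0))))))
      (.all A))

/-- the axioms Q1–Q8. -/
inductive QAx : AForm → Prop
  | q1 : QAx (.all (.imp (.eq (.succ (.var 0)) .zero) .fal))
  | q2 : QAx (.all (.all (.imp (.eq (.succ (.var 1)) (.succ (.var 0))) (.eq (.var 1) (.var 0)))))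
  | q3 : QAx (.all (.or (.eq (.var 0) .zero) (.ex (.eq (.succ (.var 0)) (.var 1)))))
  | q4 : QAx (.all (.eq (.add (.var 0) .zero) (.var 0)))
  | q5 : QAx (.all (.all (.eq (.add (.var 1) (.succ (.var 0))) (.succ (.add (.var 1) (.var 0))))))
  | q6 : QAx (.all (.eq (.mul (.var 0) .zero) .zero))
  | q7 : QAx (.all (.all (.eq (.mul (.var 1) (.succ (.var 0))) (.add (.mul (.var 1) (.var 0)) (.var 1)))))
  | q8 : QAx (.all (.all (AForm.iffA (.lt (.var 1) (.var 0))
      (.ex (.eq (.add (.var 2) (.succ (.var 0))) (.var 1))))))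

/-- the axioms of Heyting Arithmetic: Q1–Q8 and full induction. -/
def HAAx : AForm → Prop := fun A => QAx A ∨ ∃ B : AForm, A = indAx B

/-- provability in HA. -/
def HAProves : AForm → Prop := Prf HAAx

/-- interface for the standard arithmetized provability predicate `Prov_HA` of HA:
`Pr A` is the Σ₁ sentence `Prov_HA(⌜A⌝)`. -/
structure ProvPred where
  Pr : AForm → AForm
  sentence : ∀ A, (Pr A).vlt 0
  sigma1 : ∀ A, Sigma1 (Pr A)
  correct : ∀ A : AForm, ((Pr A).SatN (fun _ => 0) ↔ HAProves A)
  dNec : ∀ A, HAProves A → HAProves (Pr A)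
  dK : ∀ A B, HAProves (.imp (Pr (.imp A B)) (.imp (Pr A) (Pr B)))
  dSigma : ∀ A, Sigma1 A → A.vlt 0 → HAProves (.imp A (Pr A))
  dLob : ∀ A, HAProves (.imp (Pr (.imp (Pr A) A)) (Pr A))

/-- the arithmetical interpretation `σ_HA` of modal formulas determined by a
substitution `σ` and a provability predicate `Pr`. -/
def interp (Pr : AForm → AForm) (σ : ℕ → AForm) : Form → AForm
  | .var n => σ n
  | .bot => .fal
  | .and A B => .and (interp Pr σ A) (interp Pr σ B)
  | .or A B => .or (interp Pr σ A) (interp Pr σ B)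
  | .imp A B => .imp (interp Pr σ A) (interp Pr σ B)
  | .box A => Pr (interp Pr σ A)

/-- σ is an arithmetical substitution: it maps atomic variables to sentences. -/
def ArithSubst (σ : ℕ → AForm) : Prop := ∀ n, (σ n).vlt 0

/-- σ is a Σ₁-substitution: it maps atomic variables to Σ₁ sentences. -/
def Sigma1Subst (σ : ℕ → AForm) : Prop := ∀ n, Sigma1 (σ n) ∧ (σ n).vlt 0

/-! ## The theories HAₓ and indexed provability (for the refined Leivant principle) -/

/-- induction formulas of the special shape (A→B)→B with A, B ∈ Σ₁. -/
def shapeInd (A : AForm) : Prop := ∃ S Tf : AForm, Sigma1 S ∧ Sigma1 Tf ∧ A = .imp (.imp S Tf) Tf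

/-- the axioms of HAₓ: Q1-Q8, and induction restricted to formulas of the shape
(A→B)→B with A,B ∈ Σ₁ or with Gödel number ≤ x. -/
def HAxAx (x : ℕ) : AForm → Prop := fun A =>
  QAx A ∨ ∃ B : AForm, (shapeInd B ∨ B.code ≤ x) ∧ A = indAx B

/-- interface for the arithmetized bounded provability predicates `□ₓ`:
`PrB A` is the Σ₁ formula with free variable 0 expressing `Prov_{HA_{v₀}}(⌜A⌝)`, and
`PrBSub A` (for `A` with one free variable) is the Σ₁ formula with free variables 0, 1
expressing `Prov_{HA_{v₀}}(⌜A(v̇₁)⌝)`. -/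
structure BddProvPred where
  PrB : AForm → AForm
  PrBSub : AForm → AForm
  PrB_vlt : ∀ A, (PrB A).vlt 1
  PrB_sigma1 : ∀ A, Sigma1 (PrB A)
  PrB_correct : ∀ (A : AForm) (n : ℕ),
    ((PrB A).SatN (fun i => if i = 0 then n else 0) ↔ Prf (HAxAx n) A)
  PrBSub_vlt : ∀ A, (PrBSub A).vlt 2
  PrBSub_sigma1 : ∀ A, Sigma1 (PrBSub A)
  PrBSub_correct : ∀ (A : AForm) (n m : ℕ),
    ((PrBSub A).SatN (fun i => if i = 0 then n else m) ↔ Prf (HAxAx n) (A.subst 0 (numeral m)))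

/-! ## First-order Kripke models of HA -/

/-- a first-order Kripke model for the language of arithmetic over the frame `(W, le)`:
each node carries a classical structure, and the structure at a smaller node is a weak
substructure of the structure at a bigger one (realized as subsets of a common universe,
closed under the operations). -/
structure FOKripke (W : Type) (le : W → W → Prop) where
  U : Type
  dom : W → Set U
  zero : U
  succ : U → U
  add : U → U → U
  mul : U → U → U
  ltR : U → U → Prop
  dom_mono : ∀ {a b : W}, le a b → dom a ⊆ dom b
  zero_mem : ∀ a, zero ∈ dom a
  succ_mem : ∀ a x, x ∈ dom a → succ x ∈ dom a
  add_mem : ∀ a x y, x ∈ dom a → y ∈ dom a → add x y ∈ dom a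
  mul_mem : ∀ a x y, x ∈ dom a → y ∈ dom a → mul x y ∈ dom a

/-- evaluation of a term in a first-order Kripke model. -/
def tevalK {W : Type} {le : W → W → Prop} (M : FOKripke W le) (ρ : ℕ → M.U) : ATerm → M.U
  | .var n => ρ n
  | .zero => M.zero
  | .succ t => M.succ (tevalK M ρ t)
  | .add t u => M.add (tevalK M ρ t) (tevalK M ρ u)
  | .mul t u => M.mul (tevalK M ρ t) (tevalK M ρ u)

/-- the forcing relation of a first-order Kripke model. -/
def FOForces {W : Type} {le : W → W → Prop} (M : FOKripke W le) :
    AForm → W → (ℕ → M.U) → Prop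
  | .eq t u, _, ρ => tevalK M ρ t = tevalK M ρ u
  | .lt t u, _, ρ => M.ltR (tevalK M ρ t) (tevalK M ρ u)
  | .fal, _, _ => False
  | .and A B, w, ρ => FOForces M A w ρ ∧ FOForces M B w ρ
  | .or A B, w, ρ => FOForces M A w ρ ∨ FOForces M B w ρ
  | .imp A B, w, ρ => ∀ v, le w v → FOForces M A v ρ → FOForces M B v ρ
  | .all A, w, ρ => ∀ v, le w v → ∀ b ∈ M.dom v, FOForces M A v (econs b ρ)
  | .ex A, w, ρ => ∃ b ∈ M.dom w, FOForces M A w (econs b ρ)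

/-- the Kripke model forces all axioms of HA. -/
def ForcesHA {W : Type} {le : W → W → Prop} (M : FOKripke W le) : Prop :=
  ∀ A : AForm, HAAx A → ∀ w : W, FOForces M A w (fun _ => M.zero)

end PLHA

/-!
Soundness: a perfect model validates K and 4 because `R ⊆ ≤` and `≤;R ⊆ R`, CP because `R ⊆ ≤`
and forcing is upward persistent, and Löb's axiom by well-founded induction along `R⁻¹`.

Completeness: if `LC ⊬ A`, take as worlds the consistent prime sets of subformulas of `A` that
are closed under LC-derivability among subformulas of `A`, ordered by inclusion, with `Γ R Δ` when `Γ ⊆ Δ`, the bodies of the boxes of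
`Γ` lie in `Δ`, and `Δ` contains a boxed formula that `Γ` lacks. This finite model is perfect,
and the truth lemma holds thanks to Löb's axiom together with CP. A finite perfect model is
turned into one with a tree frame by unravelling it into strictly increasing `≤`-chains from a
root, which preserves forcing at the tips, finiteness and perfection.
-/

namespace PLHA

namespace PKripke

variable (M : PKripke)

def lt (a b : M.W) : Prop := M.le a b ∧ a ≠ b

variable {M}

theorem revWF_of_finite [Finite M.W] (hlt : ∀ {a b : M.W}, M.r a b → M.lt a b) : M.RevWF := by
  have : IsTrans M.W (fun a b => M.r b a) := ⟨fun _ _ _ hba hcb => M.le_r (hlt hcb).1 hba⟩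
  have : Std.Irrefl (fun a b : M.W => M.r b a) := ⟨fun a haa => (hlt haa).2 rfl⟩
  exact Finite.wellFounded_of_trans_of_irrefl _

end PKripke

section Soundness

variable {M : PKripke}

theorem pforces_mono {A : Form} {w v : M.W} (h : M.le w v) (hA : pforces M A w) :
    pforces M A v := by
  induction A generalizing w v with
  | var k => exact M.mono h hA
  | bot => exact hA
  | and A B ihA ihB => exact ⟨ihA h hA.1, ihB h hA.2⟩
  | or A B ihA ihB => exact hA.imp (ihA h) (ihB h)
  | imp A B _ _ => exact fun u hu => hA u (M.le_trans h hu)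
  | box A _ => exact fun u hu => hA u (M.le_r h hu)

theorem pforces_of_ipcAx {F : Form} (h : IpcAx F) (w : M.W) : pforces M F w := by
  cases h with
  | a1 A B => exact fun v _ hA u hu _ => pforces_mono hu hA
  | a2 A B C =>
    exact fun v _ hABC u hu hAB t ht hA =>
      hABC t (M.le_trans hu ht) hA t (M.le_refl t) (hAB t ht hA)
  | a3 A B => exact fun v _ hA u hu hB => ⟨pforces_mono hu hA, hB⟩
  | a4 A B => exact fun v _ h => h.1
  | a5 A B => exact fun v _ h => h.2
  | a6 A B => exact fun v _ h => Or.inl h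
  | a7 A B => exact fun v _ h => Or.inr h
  | a8 A B C =>
    exact fun v _ hAC u hu hBC t ht hAB =>
      hAB.elim (hAC t (M.le_trans hu ht)) (hBC t ht)
  | a9 A => exact fun v _ h => h.elim

theorem pforces_of_lcProves (hwf : M.RevWF) (hle : ∀ {a b : M.W}, M.r a b → M.le a b)
    {A : Form} (h : LCProves A) (w : M.W) : pforces M A w := by
  induction h generalizing w with
  | ax hax =>
    rcases hax with hgl | ⟨B, rfl⟩
    · cases hgl with
      | k A B => exact fun v _ hAB u hu hA t ht => hAB t (M.le_r hu ht) t (M.le_refl t) (hA t ht)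
      | four A => exact fun v _ hA u hu t ht => hA t (M.le_r (hle hu) ht)
      | lob A =>
        intro v _ hlob u hvu
        induction u using hwf.induction with
        | _ u ih => exact hlob u hvu u (M.le_refl u) fun t hut => ih t hut (M.le_r (hle hvu) hut)
    · exact fun v _ hB u hu => pforces_mono (hle hu) hB
  | ipc hax => exact pforces_of_ipcAx hax w
  | mp _ _ ihAB ihA => exact ihAB w w (M.le_refl w) (ihA w)
  | nec _ _ ih => exact fun v _ => ih v

end Soundness

/-- Derivability in LC from a set of hypotheses, without necessitation on the hypotheses. -/
inductive Derivable (Γ : Set Form) : Form → Prop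
  | hyp {A} : A ∈ Γ → Derivable Γ A
  | thm {A} : LCProves A → Derivable Γ A
  | mp {A B} : Derivable Γ (.imp A B) → Derivable Γ A → Derivable Γ B

namespace Derivable

variable {Γ : Set Form} {A B C : Form}

theorem ipc (h : IpcAx A) : Derivable Γ A := thm (Proves.ipc h)

theorem imp_intro (h : Derivable (insert A Γ) B) : Derivable Γ (.imp A B) := by
  induction h with
  | @hyp C hC =>
    rcases Set.mem_insert_iff.mp hC with rfl | hC
    · exact mp (mp (ipc (.a2 C (.imp C C) C)) (ipc (.a1 C (.imp C C)))) (ipc (.a1 C C))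
    · exact mp (ipc (.a1 C A)) (hyp hC)
  | @thm C hC => exact mp (ipc (.a1 C A)) (thm hC)
  | @mp C D _ _ ihCD ihC => exact mp (mp (ipc (.a2 A C D)) ihCD) ihC

theorem cut {Θ : Set Form} (h : Derivable Θ B) (hΘ : ∀ E ∈ Θ, Derivable Γ E) :
    Derivable Γ B := by
  induction h with
  | hyp h => exact hΘ _ h
  | thm h => exact thm h
  | mp _ _ ihAB ihA => exact mp ihAB ihA

theorem box_image (h : Derivable Γ B) : Derivable (Form.box '' Γ) (.box B) := by
  induction h with
  | hyp h => exact hyp ⟨_, h, rfl⟩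
  | thm h => exact thm (Proves.nec rfl h)
  | @mp C D _ _ ihCD ihC => exact mp (mp (thm (Proves.ax (Or.inl (GLAx.k C D)))) ihCD) ihC

theorem lcProves (h : Derivable ∅ B) : LCProves B := by
  induction h with
  | hyp h => exact absurd h (Set.notMem_empty _)
  | thm h => exact h
  | mp _ _ ihAB ihA => exact Proves.mp ihAB ihA

theorem and_intro (hA : Derivable Γ A) (hB : Derivable Γ B) : Derivable Γ (.and A B) :=
  mp (mp (ipc (.a3 A B)) hA) hB

theorem and_left (h : Derivable Γ (.and A B)) : Derivable Γ A := mp (ipc (.a4 A B)) h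

theorem and_right (h : Derivable Γ (.and A B)) : Derivable Γ B := mp (ipc (.a5 A B)) h

theorem or_inl (h : Derivable Γ A) : Derivable Γ (.or A B) := mp (ipc (.a6 A B)) h

theorem or_inr (h : Derivable Γ B) : Derivable Γ (.or A B) := mp (ipc (.a7 A B)) h

theorem or_elim (h : Derivable Γ (.or A B)) (hA : Derivable Γ (.imp A C))
    (hB : Derivable Γ (.imp B C)) : Derivable Γ C :=
  mp (mp (mp (ipc (.a8 A B C)) hA) hB) h

theorem bot_elim (h : Derivable Γ .bot) : Derivable Γ A := mp (ipc (.a9 A)) h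

end Derivable

def subformulas : Form → Finset Form
  | .var n => {.var n}
  | .bot => {.bot}
  | .and A B => insert (.and A B) (subformulas A ∪ subformulas B)
  | .or A B => insert (.or A B) (subformulas A ∪ subformulas B)
  | .imp A B => insert (.imp A B) (subformulas A ∪ subformulas B)
  | .box A => insert (.box A) (subformulas A)

theorem mem_subformulas_self (A : Form) : A ∈ subformulas A := by
  cases A <;> simp [subformulas]

theorem subformulas_subset_of_mem {A B : Form} (h : B ∈ subformulas A) :
    subformulas B ⊆ subformulas A := by
  induction A with
  | var | bot => simp_all [subformulas]
  | and A C ihA ihC | or A C ihA ihC | imp A C ihA ihC =>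
    simp only [subformulas, Finset.mem_insert, Finset.mem_union] at h ⊢
    rcases h with rfl | h | h
    · exact subset_rfl
    · exact (ihA h).trans (Finset.subset_union_left.trans (Finset.subset_insert _ _))
    · exact (ihC h).trans (Finset.subset_union_right.trans (Finset.subset_insert _ _))
  | box A ihA =>
    simp only [subformulas, Finset.mem_insert] at h ⊢
    rcases h with rfl | h
    · exact subset_rfl
    · exact (ihA h).trans (Finset.subset_insert _ _)

def SubformulaClosed (S : Finset Form) : Prop := ∀ B ∈ S, subformulas B ⊆ S

theorem subformulaClosed_subformulas (A : Form) : SubformulaClosed (subformulas A) :=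
  fun _ => subformulas_subset_of_mem

namespace SubformulaClosed

variable {S : Finset Form} {A B : Form}

theorem and_left (hS : SubformulaClosed S) (h : Form.and A B ∈ S) : A ∈ S :=
  hS _ h (by simp [subformulas, mem_subformulas_self])

theorem and_right (hS : SubformulaClosed S) (h : Form.and A B ∈ S) : B ∈ S :=
  hS _ h (by simp [subformulas, mem_subformulas_self])

theorem or_left (hS : SubformulaClosed S) (h : Form.or A B ∈ S) : A ∈ S :=
  hS _ h (by simp [subformulas, mem_subformulas_self])

theorem or_right (hS : SubformulaClosed S) (h : Form.or A B ∈ S) : B ∈ S :=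
  hS _ h (by simp [subformulas, mem_subformulas_self])

theorem imp_left (hS : SubformulaClosed S) (h : Form.imp A B ∈ S) : A ∈ S :=
  hS _ h (by simp [subformulas, mem_subformulas_self])

theorem imp_right (hS : SubformulaClosed S) (h : Form.imp A B ∈ S) : B ∈ S :=
  hS _ h (by simp [subformulas, mem_subformulas_self])

theorem of_box (hS : SubformulaClosed S) (h : Form.box A ∈ S) : A ∈ S :=
  hS _ h (by simp [subformulas, mem_subformulas_self])

end SubformulaClosed

@[ext]
structure PrimeTheory (S : Finset Form) where
  carrier : Finset Form
  subset : carrier ⊆ S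
  closed : ∀ C ∈ S, Derivable ↑carrier C → C ∈ carrier
  prime : ∀ C D : Form, Form.or C D ∈ carrier → C ∈ carrier ∨ D ∈ carrier
  consistent : ¬ Derivable ↑carrier .bot

namespace PrimeTheory

variable {S : Finset Form}

instance : Finite (PrimeTheory S) :=
  Finite.of_injective
    (fun Γ : PrimeTheory S => (⟨Γ.carrier, Finset.mem_powerset.mpr Γ.subset⟩ : S.powerset))
    fun _ _ h => PrimeTheory.ext (congrArg Subtype.val h)

theorem exists_superset_not_derivable (hS : SubformulaClosed S) {Δ : Finset Form} (hΔS : Δ ⊆ S)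
    {B : Form} (hΔB : ¬ Derivable ↑Δ B) :
    ∃ Γ : PrimeTheory S, Δ ⊆ Γ.carrier ∧ ¬ Derivable ↑Γ.carrier B := by
  classical
  set cands := S.powerset.filter fun Θ => Δ ⊆ Θ ∧ ¬ Derivable ↑Θ B
  obtain ⟨Γ, hΓ, hmax⟩ := cands.exists_max_image Finset.card ⟨Δ, by simp [cands, hΔS, hΔB]⟩
  simp only [cands, Finset.mem_filter, Finset.mem_powerset] at hΓ hmax
  obtain ⟨hΓS, hΔΓ, hΓB⟩ := hΓ
  have hmaximal : ∀ C ∈ S, C ∉ Γ → Derivable (insert C ↑Γ) B := by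
    intro C hCS hCΓ
    by_contra hCB
    have := hmax (insert C Γ) ⟨Finset.insert_subset hCS hΓS, hΔΓ.trans (Finset.subset_insert _ _),
      by rwa [Finset.coe_insert]⟩
    rw [Finset.card_insert_of_notMem hCΓ] at this
    omega
  refine ⟨⟨Γ, hΓS, ?_, ?_, ?_⟩, hΔΓ, hΓB⟩
  · intro C hCS hΓC
    by_contra hCΓ
    exact hΓB (.mp (hmaximal C hCS hCΓ).imp_intro hΓC)
  · intro C D hCD
    by_contra! hCΓ
    exact hΓB (.or_elim (.hyp hCD) (hmaximal C (hS.or_left (hΓS hCD)) hCΓ.1).imp_intro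
      (hmaximal D (hS.or_right (hΓS hCD)) hCΓ.2).imp_intro)
  · exact fun hbot => hΓB hbot.bot_elim

end PrimeTheory

-- The new boxed formula makes `R` irreflexive, hence reverse well-founded on the finite model.
def canonicalR (S : Finset Form) (Γ Δ : PrimeTheory S) : Prop :=
  Γ.carrier ⊆ Δ.carrier ∧ (∀ C, Form.box C ∈ Γ.carrier → C ∈ Δ.carrier) ∧
    ∃ C, Form.box C ∈ Δ.carrier ∧ Form.box C ∉ Γ.carrier

def canonicalModel (S : Finset Form) : PKripke where
  W := PrimeTheory S
  le Γ Δ := Γ.carrier ⊆ Δ.carrier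
  r := canonicalR S
  V Γ n := Form.var n ∈ Γ.carrier
  le_refl _ := subset_rfl
  le_trans h₁ h₂ := h₁.trans h₂
  le_antisymm h₁ h₂ := PrimeTheory.ext (h₁.antisymm h₂)
  le_r {_ _ _} h₁ h₂ :=
    let ⟨hsub, hbox, C, hCΔ, hCΘ⟩ := h₂
    ⟨h₁.trans hsub, fun C hC => hbox C (h₁ hC), C, hCΔ, fun hC => hCΘ (h₁ hC)⟩
  mono h₁ h₂ := h₁ h₂

instance (S : Finset Form) : Finite (canonicalModel S).W :=
  inferInstanceAs (Finite (PrimeTheory S))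

theorem canonicalModel_perfect (S : Finset Form) : (canonicalModel S).Perfect := by
  have hlt {Γ Δ : PrimeTheory S} (h : canonicalR S Γ Δ) : (canonicalModel S).lt Γ Δ := by
    obtain ⟨hsub, -, C, hCΔ, hCΓ⟩ := h
    exact ⟨hsub, fun hΓΔ => hCΓ (hΓΔ ▸ hCΔ)⟩
  refine ⟨?_, PKripke.revWF_of_finite (M := canonicalModel S) hlt, hlt⟩
  intro Γ Δ Θ ⟨hsub, hbox, C, hCΔ, hCΓ⟩ hΔΘ
  exact ⟨hsub.trans hΔΘ, fun D hD => hΔΘ (hbox D hD), C, hΔΘ hCΔ, hCΓ⟩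

theorem exists_canonicalR_not_mem {S : Finset Form} (hS : SubformulaClosed S) (Γ : PrimeTheory S)
    {B : Form} (hBS : Form.box B ∈ S) (hBΓ : Form.box B ∉ Γ.carrier) :
    ∃ Δ : PrimeTheory S, canonicalR S Γ Δ ∧ B ∉ Δ.carrier := by
  classical
  set bodies := S.filter fun C => Form.box C ∈ Γ.carrier
  have hbodies : ∀ {C}, C ∈ bodies ↔ Form.box C ∈ Γ.carrier := fun {C} => by
    simpa [bodies] using fun h => hS.of_box (Γ.subset h)
  have hΔS : insert (Form.box B) (Γ.carrier ∪ bodies) ⊆ S :=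
    Finset.insert_subset hBS (Finset.union_subset Γ.subset (Finset.filter_subset _ _))
  -- Löb's axiom turns `Γ, bodies ⊢ □B → B` into `Γ ⊢ □B`, with CP supplying `□G` for `G ∈ Γ`.
  have hB : ¬ Derivable ↑(insert (Form.box B) (Γ.carrier ∪ bodies)) B := by
    intro hB
    rw [Finset.coe_insert] at hB
    have hlob : Derivable (Form.box '' ↑(Γ.carrier ∪ bodies)) (.box B) :=
      .mp (.thm (Proves.ax (Or.inl (GLAx.lob B)))) hB.imp_intro.box_image
    refine hBΓ (Γ.closed _ hBS (hlob.cut ?_))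
    rintro _ ⟨G, hG, rfl⟩
    rcases Finset.mem_union.mp hG with hG | hG
    · exact .mp (.thm (Proves.ax (Or.inr ⟨G, rfl⟩))) (.hyp hG)
    · exact .hyp (hbodies.mp hG)
  obtain ⟨Δ, hsub, hΔB⟩ := PrimeTheory.exists_superset_not_derivable hS hΔS hB
  refine ⟨Δ, ⟨fun G hG => hsub (by simp [hG]), fun C hC => hsub (by simp [hbodies.mpr hC]),
    B, hsub (Finset.mem_insert_self _ _), hBΓ⟩, fun hBΔ => hΔB (.hyp hBΔ)⟩

theorem pforces_canonicalModel_iff {S : Finset Form} (hS : SubformulaClosed S) {B : Form}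
    (hBS : B ∈ S) (Γ : PrimeTheory S) : pforces (canonicalModel S) B Γ ↔ B ∈ Γ.carrier := by
  induction B generalizing Γ with
  | var n => exact Iff.rfl
  | bot => exact ⟨False.elim, fun h => Γ.consistent (.hyp h)⟩
  | and A C ihA ihC =>
    simp only [pforces]
    rw [ihA (hS.and_left hBS), ihC (hS.and_right hBS)]
    exact ⟨fun ⟨hA, hC⟩ => Γ.closed _ hBS (.and_intro (.hyp hA) (.hyp hC)),
      fun h => ⟨Γ.closed _ (hS.and_left hBS) (.and_left (.hyp h)),
        Γ.closed _ (hS.and_right hBS) (.and_right (.hyp h))⟩⟩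
  | or A C ihA ihC =>
    simp only [pforces]
    rw [ihA (hS.or_left hBS), ihC (hS.or_right hBS)]
    exact ⟨fun h => h.elim (fun hA => Γ.closed _ hBS (.or_inl (.hyp hA)))
      (fun hC => Γ.closed _ hBS (.or_inr (.hyp hC))), Γ.prime A C⟩
  | imp A C ihA ihC =>
    simp only [pforces]
    constructor
    · intro hAC
      by_contra hΓ
      have hnot : ¬ Derivable ↑(insert A Γ.carrier) C := by
        rw [Finset.coe_insert]
        exact fun h => hΓ (Γ.closed _ hBS h.imp_intro)
      obtain ⟨Δ, hsub, hΔC⟩ := PrimeTheory.exists_superset_not_derivable hS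
        (Finset.insert_subset (hS.imp_left hBS) Γ.subset) hnot
      have hAΔ := (ihA (hS.imp_left hBS) Δ).mpr (hsub (Finset.mem_insert_self _ _))
      have hCΔ := hAC Δ ((Finset.subset_insert _ _).trans hsub) hAΔ
      exact hΔC (.hyp ((ihC (hS.imp_right hBS) Δ).mp hCΔ))
    · intro hAC Δ hΓΔ hA
      refine (ihC (hS.imp_right hBS) Δ).mpr (Δ.closed _ (hS.imp_right hBS) ?_)
      exact .mp (.hyp (hΓΔ hAC)) (.hyp ((ihA (hS.imp_left hBS) Δ).mp hA))
  | box A ihA =>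
    simp only [pforces]
    constructor
    · intro hA
      by_contra hΓ
      obtain ⟨Δ, hΓΔ, hAΔ⟩ := exists_canonicalR_not_mem hS Γ hBS hΓ
      exact hAΔ ((ihA (hS.of_box hBS) Δ).mp (hA Δ hΓΔ))
    · exact fun hA Δ hΓΔ => (ihA (hS.of_box hBS) Δ).mpr (hΓΔ.2.1 A hA)

theorem exists_not_pforces_canonicalModel {A : Form} (hA : ¬ LCProves A) :
    ∃ Γ : PrimeTheory (subformulas A), ¬ pforces (canonicalModel (subformulas A)) A Γ := by
  have hS := subformulaClosed_subformulas A
  have hA' : ¬ Derivable ↑(∅ : Finset Form) A := by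
    rw [Finset.coe_empty]
    exact fun h => hA h.lcProves
  obtain ⟨Γ, -, hΓA⟩ := PrimeTheory.exists_superset_not_derivable hS (Finset.empty_subset _) hA'
  exact ⟨Γ, fun hΓ => hΓA (.hyp ((pforces_canonicalModel_iff hS (mem_subformulas_self A) Γ).mp hΓ))⟩

namespace PKripke

variable (M : PKripke) (w₀ : M.W)

/-- A strictly `≤`-increasing chain of worlds from `w₀`, stored tip first. -/
structure Path where
  tip : M.W
  trail : List M.W
  isChain : (tip :: trail).IsChain fun a b => M.lt b a
  getLast_eq : (tip :: trail).getLast (List.cons_ne_nil _ _) = w₀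

namespace Path

variable {M w₀}

theorem le_of_mem_of_isChain {a x : M.W} {l : List M.W}
    (hl : (a :: l).IsChain fun a b => M.lt b a) (hx : x ∈ a :: l) : M.le x a := by
  induction l generalizing a with
  | nil => rw [List.mem_singleton.mp hx]; exact M.le_refl a
  | cons b l ih =>
    rw [List.isChain_cons_cons] at hl
    rcases List.mem_cons.mp hx with rfl | hx
    · exact M.le_refl x
    · exact M.le_trans (ih hl.2 hx) hl.1.1

theorem nodup_of_isChain {a : M.W} {l : List M.W} (hl : (a :: l).IsChain fun a b => M.lt b a) :
    (a :: l).Nodup := by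
  induction l generalizing a with
  | nil => exact List.nodup_singleton a
  | cons b l ih =>
    rw [List.isChain_cons_cons] at hl
    exact List.nodup_cons.mpr
      ⟨fun ha => hl.1.2 (M.le_antisymm hl.1.1 (le_of_mem_of_isChain hl.2 ha)), ih hl.2⟩

def toList (p : Path M w₀) : List M.W := p.tip :: p.trail

theorem toList_injective : Function.Injective (toList : Path M w₀ → List M.W) := by
  rintro ⟨a, l, _, _⟩ ⟨b, m, _, _⟩ h
  obtain ⟨rfl, rfl⟩ := List.cons.inj h
  rfl

instance [Finite M.W] : Finite (Path M w₀) := by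
  have := Fintype.ofFinite M.W
  exact Finite.of_injective
    (fun p => (⟨p.toList, nodup_of_isChain p.isChain⟩ : {l : List M.W // l.Nodup}))
    fun _ _ h => toList_injective (congrArg Subtype.val h)

theorem tip_le_tip {p q : Path M w₀} (h : p.toList <:+ q.toList) : M.le p.tip q.tip :=
  le_of_mem_of_isChain q.isChain (h.subset List.mem_cons_self)

def root : Path M w₀ := ⟨w₀, [], List.isChain_singleton w₀, rfl⟩

theorem root_suffix (p : Path M w₀) : (root : Path M w₀).toList <:+ p.toList := by
  refine ⟨p.toList.dropLast, ?_⟩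
  have := List.dropLast_append_getLast (List.cons_ne_nil p.tip p.trail)
  rwa [p.getLast_eq] at this

def cons (p : Path M w₀) (v : M.W) (h : M.lt p.tip v) : Path M w₀ :=
  ⟨v, p.toList, p.isChain.cons_cons h, by rw [List.getLast_cons]; exact p.getLast_eq⟩

theorem exists_suffix_tip_eq (p : Path M w₀) {v : M.W} (h : M.le p.tip v) :
    ∃ q : Path M w₀, p.toList <:+ q.toList ∧ q.tip = v := by
  by_cases hv : p.tip = v
  · exact ⟨p, List.suffix_refl _, hv⟩
  · exact ⟨p.cons v ⟨h, hv⟩, List.suffix_cons _ _, rfl⟩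

end Path

def unravel : PKripke where
  W := Path M w₀
  le p q := p.toList <:+ q.toList
  r p q := p.toList <:+ q.toList ∧ M.r p.tip q.tip
  V p := M.V p.tip
  le_refl _ := List.suffix_refl _
  le_trans h₁ h₂ := h₁.trans h₂
  le_antisymm h₁ h₂ := Path.toList_injective (h₁.eq_of_length (h₁.length_le.antisymm h₂.length_le))
  le_r h₁ h₂ := ⟨h₁.trans h₂.1, M.le_r (Path.tip_le_tip h₁) h₂.2⟩
  mono h := M.mono (Path.tip_le_tip h)

instance [Finite M.W] : Finite (M.unravel w₀).W := inferInstanceAs (Finite (Path M w₀))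

theorem unravel_treeFrame : (M.unravel w₀).TreeFrame :=
  ⟨⟨Path.root, Path.root_suffix⟩, fun _ _ _ hu hv => List.suffix_or_suffix_of_suffix hu hv⟩

variable {M}

theorem Perfect.unravel (hM : M.Perfect) : (M.unravel w₀).Perfect := by
  refine ⟨fun h₁ h₂ => ⟨h₁.1.trans h₂, hM.1 h₁.2 (Path.tip_le_tip h₂)⟩, ?_, fun h => ⟨h.1, ?_⟩⟩
  · exact Subrelation.wf (fun h => h.2) (InvImage.wf Path.tip hM.2.1)
  · rintro rfl
    exact (hM.2.2 h.2).2 rfl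

variable {w₀} in
theorem pforces_unravel_iff (hle : ∀ {a b : M.W}, M.r a b → M.le a b) (B : Form)
    (p : Path M w₀) : pforces (M.unravel w₀) B p ↔ pforces M B p.tip := by
  induction B generalizing p with
  | var n | bot => exact Iff.rfl
  | and A C ihA ihC | or A C ihA ihC => simp only [pforces, ihA, ihC]
  | imp A C ihA ihC =>
    simp only [pforces]
    constructor
    · intro hAC v hv hA
      obtain ⟨q, hpq, rfl⟩ := p.exists_suffix_tip_eq hv
      exact (ihC q).mp (hAC q hpq ((ihA q).mpr hA))
    · exact fun hAC q hpq hA => (ihC q).mpr (hAC _ (Path.tip_le_tip hpq) ((ihA q).mp hA))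
  | box A ihA =>
    simp only [pforces]
    constructor
    · intro hA v hv
      obtain ⟨q, hpq, rfl⟩ := p.exists_suffix_tip_eq (hle hv)
      exact (ihA q).mp (hA q ⟨hpq, hv⟩)
    · exact fun hA q hpq => (ihA q).mpr (hA _ hpq.2)

end PKripke

/-- LC is sound and complete with respect to finite perfect Kripke
models with tree frames. -/
theorem LC_kripke_sound_complete (A : Form) :
    LCProves A ↔
      ∀ M : PKripke, Finite M.W → M.Perfect → M.TreeFrame → ∀ w : M.W, pforces M A w := by
  refine ⟨fun hA M _ hM _ => pforces_of_lcProves hM.2.1 (fun h => (hM.2.2 h).1) hA, fun hA => ?_⟩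
  by_contra hnot
  obtain ⟨Γ, hΓ⟩ := exists_not_pforces_canonicalModel hnot
  have hM := canonicalModel_perfect (subformulas A)
  have hroot := hA _ inferInstance (hM.unravel Γ) ((canonicalModel _).unravel_treeFrame Γ) .root
  exact hΓ ((PKripke.pforces_unravel_iff (fun h => (hM.2.2 h).1) A .root).mp hroot)

end PLHA
end

section
/- The theory LC is decidable: the set of modal propositions A such that LC ⊢ A is a decidable set. -/
namespace PLHA


/-!
Soundness holds for Kripke models `(W, ≤, R, V)` in which `R` is transitive, conversely
well-founded, contained in `≤`, and satisfies `≤ ; R ⊆ R`. Conversely, if `A` is not provable,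
the prime theories inside the subformulas of `A` form such a model refuting `A`: the `□` case of
the truth lemma is Löb's axiom combined with CP, and `R` is conversely well-founded because each
`R`-step adds a new boxed subformula. This countermodel has at most `2 ^ |sub A|` worlds, so `A`
is provable iff it holds in every such model of bounded size. Coding these models by natural
numbers turns this into a bounded quantification over a primitive recursive evaluation of the
code of `A`.
-/

namespace LCProves

variable {A B C G : Form}

theorem ipc (h : IpcAx A) : LCProves A := Proves.ipc h

theorem mp (h₁ : LCProves (.imp A B)) (h₂ : LCProves A) : LCProves B := Proves.mp h₁ h₂

theorem nec (h : LCProves A) : LCProves (.box A) := Proves.nec rfl h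

theorem boxK (A B : Form) : LCProves (.imp (.box (.imp A B)) (.imp (.box A) (.box B))) :=
  .ax (.inl (.k A B))

theorem lob (A : Form) : LCProves (.imp (.box (.imp (.box A) A)) (.box A)) := .ax (.inl (.lob A))

theorem cp (A : Form) : LCProves (.imp A (.box A)) := .ax (.inr ⟨A, rfl⟩)

theorem weaken (h : LCProves B) : LCProves (.imp G B) := (ipc (.a1 B G)).mp h

theorem imp_mp (h₁ : LCProves (.imp G (.imp A B))) (h₂ : LCProves (.imp G A)) :
    LCProves (.imp G B) :=
  ((ipc (.a2 G A B)).mp h₁).mp h₂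

theorem imp_refl (A : Form) : LCProves (.imp A A) :=
  imp_mp (ipc (.a1 A (.imp A A))) (ipc (.a1 A A))

theorem trans (h₁ : LCProves (.imp A B)) (h₂ : LCProves (.imp B C)) :
    LCProves (.imp A C) :=
  imp_mp (weaken h₂) h₁

theorem top : LCProves .top := imp_refl .bot

theorem imp_and_intro (h₁ : LCProves (.imp G A)) (h₂ : LCProves (.imp G B)) :
    LCProves (.imp G (.and A B)) :=
  imp_mp (imp_mp (weaken (ipc (.a3 A B))) h₁) h₂

theorem imp_and_left (h : LCProves (.imp G (.and A B))) : LCProves (.imp G A) :=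
  h.trans (ipc (.a4 A B))

theorem imp_and_right (h : LCProves (.imp G (.and A B))) : LCProves (.imp G B) :=
  h.trans (ipc (.a5 A B))

theorem imp_or_elim (h : LCProves (.imp G (.or A B)))
    (h₁ : LCProves (.imp G (.imp A C))) (h₂ : LCProves (.imp G (.imp B C))) :
    LCProves (.imp G C) :=
  imp_mp (imp_mp (imp_mp (weaken (ipc (.a8 A B C))) h₁) h₂) h

theorem imp_bot_elim (h : LCProves (.imp G .bot)) : LCProves (.imp G A) :=
  h.trans (ipc (.a9 A))

theorem curry (h : LCProves (.imp (.and A B) C)) :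
    LCProves (.imp A (.imp B C)) :=
  imp_mp (imp_mp (weaken (ipc (.a2 B (.and A B) C))) (weaken (weaken h))) (ipc (.a3 A B))

theorem box_mono (h : LCProves (.imp A B)) : LCProves (.imp (.box A) (.box B)) :=
  (boxK A B).mp h.nec

theorem box_and (A B : Form) : LCProves (.imp (.box A) (.imp (.box B) (.box (.and A B)))) :=
  (box_mono (ipc (.a3 A B))).trans (boxK B (.and A B))

end LCProves

namespace LC

open LCProves

section Derivability

variable {Γ : Finset Form} {A B D : Form}

theorem listConj_imp_of_mem {l : List Form} (h : B ∈ l) :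
    LCProves (.imp (listConj l) B) := by
  induction l using listConj.induct with
  | case1 => simp at h
  | case2 A => rw [List.mem_singleton.1 h]; exact imp_refl A
  | case3 A l hl ih =>
    rw [listConj.eq_3 A l hl]
    rcases List.mem_cons.1 h with rfl | h
    · exact ipc (.a4 _ _)
    · exact (ipc (.a5 _ _)).trans (ih h)

theorem imp_listConj {l : List Form} (h : ∀ B ∈ l, LCProves (.imp D B)) :
    LCProves (.imp D (listConj l)) := by
  induction l using listConj.induct with
  | case1 => exact weaken top
  | case2 A => exact h A (List.mem_singleton_self A)
  | case3 A l hl ih =>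
    rw [listConj.eq_3 A l hl]
    exact imp_and_intro (h A List.mem_cons_self) (ih fun B hB => h B (List.mem_cons_of_mem _ hB))

theorem imp_box_listConj {l : List Form} (h : ∀ B ∈ l, LCProves (.imp D (.box B))) :
    LCProves (.imp D (.box (listConj l))) := by
  induction l using listConj.induct with
  | case1 => exact weaken top.nec
  | case2 A => exact h A (List.mem_singleton_self A)
  | case3 A l hl ih =>
    rw [listConj.eq_3 A l hl]
    exact imp_mp (imp_mp (weaken (box_and A (listConj l))) (h A List.mem_cons_self))
      (ih fun B hB => h B (List.mem_cons_of_mem _ hB))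

noncomputable def conj (Γ : Finset Form) : Form := listConj Γ.toList

def Derivable (Γ : Finset Form) (B : Form) : Prop := LCProves (.imp (conj Γ) B)

theorem derivable_of_mem (h : B ∈ Γ) : Derivable Γ B :=
  listConj_imp_of_mem (Finset.mem_toList.2 h)

theorem derivable_of_provable (h : LCProves B) : Derivable Γ B :=
  weaken h

theorem Derivable.mp (h₁ : Derivable Γ (.imp A B))
    (h₂ : Derivable Γ A) : Derivable Γ B :=
  imp_mp h₁ h₂

theorem imp_conj (h : ∀ B ∈ Γ, LCProves (.imp D B)) :
    LCProves (.imp D (conj Γ)) :=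
  imp_listConj fun B hB => h B (Finset.mem_toList.1 hB)

theorem Derivable.imp_of_insert (h : Derivable (insert D Γ) B) :
    Derivable Γ (.imp D B) := by
  have : LCProves (.imp (.and (conj Γ) D) (conj (insert D Γ))) := imp_conj fun C hC => by
    rcases Finset.mem_insert.1 hC with rfl | hC
    · exact ipc (.a5 _ _)
    · exact (ipc (.a4 _ _)).trans (derivable_of_mem hC)
  exact curry (this.trans h)

def boxBodies (Γ : Finset Form) : Finset Form :=
  Γ.biUnion fun B => match B with | .box C => {C} | _ => ∅

@[simp]
theorem mem_boxBodies {C : Form} : C ∈ boxBodies Γ ↔ .box C ∈ Γ := by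
  constructor
  · intro h
    obtain ⟨B, hB, hC⟩ := Finset.mem_biUnion.1 h
    cases B <;> simp only [Finset.notMem_empty, Finset.mem_singleton] at hC
    exact hC ▸ hB
  · exact fun h => Finset.mem_biUnion.2 ⟨.box C, h, Finset.mem_singleton_self _⟩

/-- With `G` the conjunction of `Γ` and its box bodies, CP gives `Γ ⊢ □G`, while the premise
gives `⊢ □G → □(□B → B)`; Löb's axiom then yields `□B`. -/
theorem Derivable.box
    (h : Derivable (insert (.box B) (Γ ∪ boxBodies Γ)) B) : Derivable Γ (.box B) := by
  let G : Form := .and (conj Γ) (conj (boxBodies Γ))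
  have hG : LCProves (.imp (.and G (.box B)) (conj (insert (.box B) (Γ ∪ boxBodies Γ)))) :=
    imp_conj fun C hC => by
      rcases Finset.mem_insert.1 hC with rfl | hC
      · exact ipc (.a5 _ _)
      · rcases Finset.mem_union.1 hC with hC | hC
        · exact (ipc (.a4 _ _)).trans ((ipc (.a4 _ _)).trans (derivable_of_mem hC))
        · exact (ipc (.a4 _ _)).trans ((ipc (.a5 _ _)).trans (derivable_of_mem hC))
  have hLob : LCProves (.imp (.box G) (.box B)) := (box_mono (curry (hG.trans h))).trans (lob B)
  have hBoxG : Derivable Γ (.box G) :=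
    imp_mp (imp_mp (weaken (box_and _ _)) (cp (conj Γ)))
      (imp_box_listConj fun C hC => derivable_of_mem (mem_boxBodies.1 (Finset.mem_toList.1 hC)))
  exact imp_mp (weaken hLob) hBoxG

end Derivability

section Semantics

variable {W : Type*} {le r : W → W → Prop} {V : W → ℕ → Prop}

/-- `le_r` makes boxed formulas persistent, `r_le` validates CP, and `r_trans`, `r_wf` validate
the 4 and Löb axioms. -/
structure IsLCModel (le r : W → W → Prop) (V : W → ℕ → Prop) : Prop where
  le_refl : ∀ w, le w w
  le_trans : ∀ {u v w}, le u v → le v w → le u w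
  le_r : ∀ {u v w}, le u v → r v w → r u w
  mono : ∀ {v w n}, le v w → V v n → V w n
  r_trans : ∀ {u v w}, r u v → r v w → r u w
  r_le : ∀ {v w}, r v w → le v w
  r_wf : WellFounded (flip r)

def Forces (le r : W → W → Prop) (V : W → ℕ → Prop) : Form → W → Prop
  | .var n, w => V w n
  | .bot, _ => False
  | .and A B, w => Forces le r V A w ∧ Forces le r V B w
  | .or A B, w => Forces le r V A w ∨ Forces le r V B w
  | .imp A B, w => ∀ v, le w v → Forces le r V A v → Forces le r V B v
  | .box A, w => ∀ v, r w v → Forces le r V A v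

theorem IsLCModel.forces_mono (hM : IsLCModel le r V) {A : Form} {v w : W} (h : le v w)
    (hA : Forces le r V A v) : Forces le r V A w := by
  induction A generalizing v w with
  | var n => exact hM.mono h hA
  | bot => exact hA
  | and A B ihA ihB => exact ⟨ihA h hA.1, ihB h hA.2⟩
  | or A B ihA ihB => exact hA.imp (ihA h) (ihB h)
  | imp A B _ _ => exact fun u hu => hA u (hM.le_trans h hu)
  | box A _ => exact fun u hu => hA u (hM.le_r h hu)

theorem forces_of_provable {A : Form} (h : LCProves A) (hM : IsLCModel le r V) (w : W) :
    Forces le r V A w := by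
  induction h generalizing w with
  | ax h =>
    rcases h with h | ⟨B, rfl⟩
    · cases h with
      | k A B =>
        intro v _ hAB u hvu hA t hut
        exact hAB t (hM.le_r hvu hut) t (hM.le_refl t) (hA t hut)
      | four A => exact fun v _ hA u hvu t hut => hA t (hM.r_trans hvu hut)
      | lob A =>
        intro v _ hLob u hvu
        induction u using hM.r_wf.induction with
        | _ u ih =>
          exact hLob u hvu u (hM.le_refl u) fun t hut => ih t hut (hM.r_trans hvu hut)
    · exact fun v _ hB u hvu => hM.forces_mono (hM.r_le hvu) hB
  | ipc h =>
    cases h with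
    | a1 A B => exact fun v _ hA u hvu _ => hM.forces_mono hvu hA
    | a2 A B C =>
      intro v _ h₁ u hvu h₂ t hut hA
      exact h₁ t (hM.le_trans hvu hut) hA t (hM.le_refl t) (h₂ t hut hA)
    | a3 A B => exact fun v _ hA u hvu hB => ⟨hM.forces_mono hvu hA, hB⟩
    | a4 A B => exact fun v _ h => h.1
    | a5 A B => exact fun v _ h => h.2
    | a6 A B => exact fun v _ h => .inl h
    | a7 A B => exact fun v _ h => .inr h
    | a8 A B C =>
      intro v _ h₁ u hvu h₂ t hut hAB
      exact hAB.elim (h₁ t (hM.le_trans hvu hut)) (h₂ t hut)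
    | a9 A => exact fun v _ h => h.elim
  | mp _ _ ih₁ ih₂ => exact ih₁ w w (hM.le_refl w) (ih₂ w)
  | nec _ _ ih => exact fun v _ => ih v

theorem IsLCModel.comap {W' : Type*} (f : W' → W) (hM : IsLCModel le r V) :
    IsLCModel (fun i j => le (f i) (f j)) (fun i j => r (f i) (f j)) (fun w => V (f w)) :=
  ⟨fun _ => hM.le_refl _, hM.le_trans, hM.le_r, hM.mono, hM.r_trans, hM.r_le,
    InvImage.wf f hM.r_wf⟩

theorem forces_comap_equiv {W' : Type*} (e : W' ≃ W) (A : Form) (w : W') :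
    Forces (fun i j => le (e i) (e j)) (fun i j => r (e i) (e j)) (fun w => V (e w)) A w ↔
      Forces le r V A (e w) := by
  induction A generalizing w with
  | var n | bot => rfl
  | and A B ihA ihB => exact and_congr (ihA w) (ihB w)
  | or A B ihA ihB => exact or_congr (ihA w) (ihB w)
  | imp A B ihA ihB =>
    simp only [Forces, ihA, ihB]
    exact e.forall_congr_right
      (q := fun v => le (e w) v → Forces le r V A v → Forces le r V B v)
  | box A ihA =>
    simp only [Forces, ihA]
    exact e.forall_congr_right (q := fun v => r (e w) v → Forces le r V A v)

end Semantics

section Canonical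

def subformulas : Form → Finset Form
  | .var n => {.var n}
  | .bot => {.bot}
  | .and A B => insert (.and A B) (subformulas A ∪ subformulas B)
  | .or A B => insert (.or A B) (subformulas A ∪ subformulas B)
  | .imp A B => insert (.imp A B) (subformulas A ∪ subformulas B)
  | .box A => insert (.box A) (subformulas A)

@[simp]
theorem mem_subformulas_self (A : Form) : A ∈ subformulas A := by
  cases A <;> simp [subformulas]

theorem subformulas_subset {A B : Form} (h : B ∈ subformulas A) :
    subformulas B ⊆ subformulas A := by
  induction A with
  | var | bot => simp only [subformulas, Finset.mem_singleton] at h; rw [h]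
  | and A C ihA ihC | or A C ihA ihC | imp A C ihA ihC =>
    simp only [subformulas, Finset.mem_insert, Finset.mem_union] at h ⊢
    rcases h with rfl | h | h
    · rfl
    · exact (ihA h).trans (Finset.subset_union_left.trans (Finset.subset_insert _ _))
    · exact (ihC h).trans (Finset.subset_union_right.trans (Finset.subset_insert _ _))
  | box A ihA =>
    simp only [subformulas, Finset.mem_insert] at h ⊢
    rcases h with rfl | h
    · rfl
    · exact (ihA h).trans (Finset.subset_insert _ _)

theorem encodeForm_le_of_mem_subformulas {A B : Form} (h : B ∈ subformulas A) :
    encodeForm B ≤ encodeForm A := by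
  induction A with
  | var | bot => simp only [subformulas, Finset.mem_singleton] at h; rw [h]
  | and A C ihA ihC | or A C ihA ihC | imp A C ihA ihC =>
    simp only [subformulas, Finset.mem_insert, Finset.mem_union] at h
    rcases h with rfl | h | h
    · rfl
    · exact (ihA h).trans ((Nat.left_le_pair _ _).trans (Nat.right_le_pair _ _))
    · exact (ihC h).trans ((Nat.right_le_pair _ _).trans (Nat.right_le_pair _ _))
  | box A ihA =>
    simp only [subformulas, Finset.mem_insert] at h
    rcases h with rfl | h
    · rfl
    · exact (ihA h).trans (Nat.right_le_pair _ _)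

theorem encodeForm_injective : Function.Injective encodeForm := by
  intro A
  induction A <;> intro B h <;> cases B <;> simp only [encodeForm, Nat.pair_eq_pair] at h <;> grind

theorem card_subformulas_le (A : Form) : (subformulas A).card ≤ encodeForm A + 1 := by
  simpa using Finset.card_le_card_of_injOn encodeForm
    (fun B hB => Finset.mem_range_succ_iff.2 (encodeForm_le_of_mem_subformulas hB))
    encodeForm_injective.injOn

def IsSubformulaClosed (S : Finset Form) : Prop := ∀ B ∈ S, subformulas B ⊆ S

theorem isSubformulaClosed_subformulas (A : Form) : IsSubformulaClosed (subformulas A) :=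
  fun _ => subformulas_subset

structure IsPrimeTheory (S Γ : Finset Form) : Prop where
  subset : Γ ⊆ S
  consistent : ¬ Derivable Γ .bot
  closed : ∀ B ∈ S, Derivable Γ B → B ∈ Γ
  prime : ∀ {B C : Form}, .or B C ∈ Γ → B ∈ Γ ∨ C ∈ Γ

theorem exists_isPrimeTheory {S Δ : Finset Form} {B : Form} (hS : IsSubformulaClosed S)
    (hΔ : Δ ⊆ S) (h : ¬ Derivable Δ B) :
    ∃ Γ, IsPrimeTheory S Γ ∧ Δ ⊆ Γ ∧ ¬ Derivable Γ B := by
  classical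
  obtain ⟨Γ, hΓ, hmax⟩ := Finset.exists_maximal
    (s := S.powerset.filter fun Γ => Δ ⊆ Γ ∧ ¬ Derivable Γ B) ⟨Δ, by simp [hΔ, h]⟩
  simp only [Finset.mem_filter, Finset.mem_powerset] at hΓ hmax
  obtain ⟨hΓS, hΔΓ, hΓB⟩ := hΓ
  have insert_derives : ∀ D ∈ S, D ∉ Γ → Derivable Γ (.imp D B) := fun D hD hDΓ => by
    by_contra hD'
    refine hDΓ (hmax ⟨Finset.insert_subset hD hΓS, hΔΓ.trans (Finset.subset_insert _ _),
      fun h' => hD' h'.imp_of_insert⟩ (Finset.subset_insert _ _) (Finset.mem_insert_self _ _))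
  refine ⟨Γ, ⟨hΓS, fun hbot => hΓB (imp_bot_elim hbot), ?_, ?_⟩, hΔΓ, hΓB⟩
  · intro D hD hΓD
    by_contra hDΓ
    exact hΓB ((insert_derives D hD hDΓ).mp hΓD)
  · intro D E hDE
    by_contra! hne
    have hDES := hS _ (hΓS hDE)
    exact hΓB (imp_or_elim (derivable_of_mem hDE)
      (insert_derives D (hDES (by simp [subformulas])) hne.1)
      (insert_derives E (hDES (by simp [subformulas])) hne.2))

def PrimeTheory (S : Finset Form) : Type := {Γ : Finset Form // IsPrimeTheory S Γ}

namespace PrimeTheory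

variable {S : Finset Form}

def toPowerset (Γ : PrimeTheory S) : S.powerset := ⟨Γ.1, Finset.mem_powerset.2 Γ.2.subset⟩

theorem toPowerset_injective : Function.Injective (toPowerset (S := S)) :=
  fun _ _ h => Subtype.ext (Subtype.mk.inj h)

instance : Finite (PrimeTheory S) := Finite.of_injective _ toPowerset_injective

theorem card_le : Nat.card (PrimeTheory S) ≤ 2 ^ S.card := by
  calc Nat.card (PrimeTheory S) ≤ Nat.card S.powerset :=
        Nat.card_le_card_of_injective _ toPowerset_injective
    _ = 2 ^ S.card := by rw [Nat.card_eq_fintype_card, Fintype.card_coe, Finset.card_powerset]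

def Le (Γ Δ : PrimeTheory S) : Prop := Γ.1 ⊆ Δ.1

/-- The new boxed formula makes `Acc` strictly increasing, hence conversely well-founded. -/
def Acc (Γ Δ : PrimeTheory S) : Prop :=
  Γ.1 ⊆ Δ.1 ∧ (∀ C, .box C ∈ Γ.1 → C ∈ Δ.1) ∧
    ∃ C, .box C ∈ Δ.1 ∧ .box C ∉ Γ.1

def Val (Γ : PrimeTheory S) (n : ℕ) : Prop := .var n ∈ Γ.1

theorem isLCModel : IsLCModel (Le (S := S)) Acc Val := by
  have r_trans : ∀ {u v w : PrimeTheory S}, Acc u v → Acc v w → Acc u w :=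
    fun ⟨h₁, h₂, _⟩ ⟨h₁', h₂', C, hC, hC'⟩ =>
      ⟨h₁.trans h₁', fun D hD => h₂' D (h₁ hD), C, hC, fun h => hC' (h₁ h)⟩
  have : IsTrans (PrimeTheory S) (flip Acc) := ⟨fun _ _ _ h₁ h₂ => r_trans h₂ h₁⟩
  have : Std.Irrefl (flip (Acc (S := S))) := ⟨fun _ ⟨_, _, _, hC, hC'⟩ => hC' hC⟩
  refine ⟨fun _ => subset_rfl, fun h₁ h₂ => h₁.trans h₂, ?_, fun h hV => h hV, r_trans,
    fun h => h.1, Finite.wellFounded_of_trans_of_irrefl _⟩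
  exact fun hle ⟨h₁, h₂, C, hC, hC'⟩ =>
    ⟨hle.trans h₁, fun D hD => h₂ D (hle hD), C, hC, fun h => hC' (hle h)⟩

theorem exists_le_of_imp_not_mem (hS : IsSubformulaClosed S) {A C : Form}
    (hAC : .imp A C ∈ S) {Γ : PrimeTheory S} (h : .imp A C ∉ Γ.1) :
    ∃ Δ, Le Γ Δ ∧ A ∈ Δ.1 ∧ C ∉ Δ.1 := by
  obtain ⟨Δ, hΔ, hsub, hΔC⟩ := exists_isPrimeTheory hS
    (Finset.insert_subset (hS _ hAC (by simp [subformulas])) Γ.2.subset)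
    fun h' => h (Γ.2.closed _ hAC h'.imp_of_insert)
  exact ⟨⟨Δ, hΔ⟩, fun _ hx => hsub (Finset.mem_insert_of_mem hx),
    hsub (Finset.mem_insert_self _ _), fun hC => hΔC (derivable_of_mem hC)⟩

theorem exists_acc_of_box_not_mem (hS : IsSubformulaClosed S) {A : Form} (hA : .box A ∈ S)
    {Γ : PrimeTheory S} (h : .box A ∉ Γ.1) : ∃ Δ, Acc Γ Δ ∧ A ∉ Δ.1 := by
  have hsubS : insert (.box A) (Γ.1 ∪ boxBodies Γ.1) ⊆ S :=
    Finset.insert_subset hA <| Finset.union_subset Γ.2.subset fun C hC =>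
      hS _ (Γ.2.subset (mem_boxBodies.1 hC)) (by simp [subformulas])
  obtain ⟨Δ, hΔ, hsub, hΔA⟩ :=
    exists_isPrimeTheory hS hsubS fun h' => h (Γ.2.closed _ hA h'.box)
  exact ⟨⟨Δ, hΔ⟩, ⟨fun _ hx => hsub (by simp [hx]), fun C hC => hsub (by simp [hC]), A,
    hsub (by simp), h⟩, fun hA' => hΔA (derivable_of_mem hA')⟩

theorem mem_iff_forces (hS : IsSubformulaClosed S) {B : Form} (hB : B ∈ S) (Γ : PrimeTheory S) :
    B ∈ Γ.1 ↔ Forces Le Acc Val B Γ := by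
  induction B generalizing Γ with
  | var n => rfl
  | bot => exact ⟨fun h => Γ.2.consistent (derivable_of_mem h), False.elim⟩
  | and A C ihA ihC =>
    have hAS : A ∈ S := hS _ hB (by simp [subformulas])
    have hCS : C ∈ S := hS _ hB (by simp [subformulas])
    constructor
    · intro h
      exact ⟨(ihA hAS Γ).1 (Γ.2.closed A hAS (imp_and_left (derivable_of_mem h))),
        (ihC hCS Γ).1 (Γ.2.closed C hCS (imp_and_right (derivable_of_mem h)))⟩
    · rintro ⟨hA, hC⟩
      exact Γ.2.closed _ hB (imp_and_intro (derivable_of_mem ((ihA hAS Γ).2 hA))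
        (derivable_of_mem ((ihC hCS Γ).2 hC)))
  | or A C ihA ihC =>
    have hAS : A ∈ S := hS _ hB (by simp [subformulas])
    have hCS : C ∈ S := hS _ hB (by simp [subformulas])
    constructor
    · exact fun h => (Γ.2.prime h).imp (ihA hAS Γ).1 (ihC hCS Γ).1
    · rintro (hA | hC)
      · exact Γ.2.closed _ hB
          ((derivable_of_provable (ipc (.a6 A C))).mp (derivable_of_mem ((ihA hAS Γ).2 hA)))
      · exact Γ.2.closed _ hB
          ((derivable_of_provable (ipc (.a7 A C))).mp (derivable_of_mem ((ihC hCS Γ).2 hC)))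
  | imp A C ihA ihC =>
    have hAS : A ∈ S := hS _ hB (by simp [subformulas])
    have hCS : C ∈ S := hS _ hB (by simp [subformulas])
    constructor
    · intro h Δ hΓΔ hA
      exact (ihC hCS Δ).1 (Δ.2.closed C hCS
        ((derivable_of_mem (hΓΔ h)).mp (derivable_of_mem ((ihA hAS Δ).2 hA))))
    · intro hf
      by_contra hnot
      obtain ⟨Δ, hΓΔ, hA, hC⟩ := exists_le_of_imp_not_mem hS hB hnot
      exact hC ((ihC hCS Δ).2 (hf Δ hΓΔ ((ihA hAS Δ).1 hA)))
  | box A ihA =>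
    have hAS : A ∈ S := hS _ hB (by simp [subformulas])
    constructor
    · exact fun h Δ hΓΔ => (ihA hAS Δ).1 (hΓΔ.2.1 A h)
    · intro hf
      by_contra hnot
      obtain ⟨Δ, hΓΔ, hA⟩ := exists_acc_of_box_not_mem hS hB hnot
      exact hA ((ihA hAS Δ).2 (hf Δ hΓΔ))

theorem exists_not_forces {A : Form} (h : ¬ LCProves A) :
    ∃ Γ : PrimeTheory (subformulas A), ¬ Forces Le Acc Val A Γ := by
  have hA : ¬ Derivable ∅ A := fun hA =>
    h (LCProves.mp hA (by simpa [conj, listConj] using LCProves.top))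
  obtain ⟨Γ, hΓ, -, hΓA⟩ :=
    exists_isPrimeTheory (isSubformulaClosed_subformulas A) (Finset.empty_subset _) hA
  exact ⟨⟨Γ, hΓ⟩, fun hf => hΓA (derivable_of_mem
    ((mem_iff_forces (isSubformulaClosed_subformulas A) (mem_subformulas_self A) _).2 hf))⟩

end PrimeTheory

end Canonical

section Codes

theorem exists_testBit_iff (p : ℕ → Prop) {t : ℕ} (hp : ∀ i, p i → i < t) :
    ∃ c < 2 ^ t, ∀ i, c.testBit i = true ↔ p i := by
  classical
  refine ⟨∑ i ∈ (Finset.range t).filter p, 2 ^ i, Nat.geomSum_lt le_rfl (by simp +contextual),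
    fun i => ?_⟩
  rw [← Nat.mem_bitIndices, ← List.mem_toFinset, Finset.toFinset_bitIndices_sum_two_pow]
  simpa using hp i

/-- The codes of the immediate subformulas, for the tags of `encodeForm`: `5` is `□`, and
`2`–`4` are the binary connectives. -/
def children (x : ℕ) : List ℕ :=
  if x.unpair.1 = 5 then [x.unpair.2]
  else if 2 ≤ x.unpair.1 then [x.unpair.2.unpair.1, x.unpair.2.unpair.2] else []

theorem lt_of_mem_children {x y : ℕ} (h : y ∈ children x) : y < x := by
  have htag : 2 ≤ x.unpair.1 := by unfold children at h; split_ifs at h <;> simp at h <;> omega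
  have hx : x.unpair.2 < x := by
    have := Nat.add_le_pair x.unpair.1 x.unpair.2
    rw [Nat.pair_unpair] at this
    omega
  unfold children at h
  split_ifs at h <;> simp only [List.mem_cons, List.not_mem_nil, or_false] at h
  · exact h ▸ hx
  · rcases h with rfl | rfl
    · exact (Nat.unpair_left_le _).trans_lt hx
    · exact (Nat.unpair_right_le _).trans_lt hx

/-- A finite Kripke model on `Fin size`, each relation read off the binary digits of a number:
`i ≤ j` is bit `pair i j` of `le`, `i R j` is bit `pair i j` of `acc`, and variable `n` holds at
`w` iff bit `pair n w` of `val` is set. -/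
structure FinModelCode where
  size : ℕ
  le : ℕ
  acc : ℕ
  val : ℕ

namespace FinModelCode

variable (M : FinModelCode)

def leBit (i j : ℕ) : Bool := M.le.testBit (Nat.pair i j)

def accBit (i j : ℕ) : Bool := M.acc.testBit (Nat.pair i j)

def valBit (w n : ℕ) : Bool := M.val.testBit (Nat.pair n w)

def Le (i j : Fin M.size) : Prop := M.leBit i j

def Acc (i j : Fin M.size) : Prop := M.accBit i j

def Val (w : Fin M.size) (n : ℕ) : Prop := M.valBit w n

theorem valBit_eq_false {w n : ℕ} (h : M.val ≤ n) : M.valBit w n = false :=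
  Nat.testBit_lt_two_pow <| Nat.lt_two_pow_self.trans_le <|
    Nat.pow_le_pow_right two_pos (h.trans (Nat.left_le_pair n w))

/-- The conditions of `IsLCModel` as bounded quantifications: monotonicity need only be checked
for variables below `val`, whose higher bits are all zero, and on a finite frame converse
well-foundedness of the transitive `R` is its irreflexivity, imposed as `R ⊆ <`. -/
def IsLC : Prop :=
  (∀ i < M.size, M.leBit i i) ∧
  (∀ i < M.size, ∀ j < M.size, ∀ k < M.size, M.leBit i j → M.leBit j k → M.leBit i k) ∧
  (∀ i < M.size, ∀ j < M.size, ∀ k < M.size,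
    M.leBit i j → M.accBit j k → M.accBit i k) ∧
  (∀ i < M.size, ∀ j < M.size, ∀ n < M.val, M.leBit i j → M.valBit i n → M.valBit j n) ∧
  (∀ i < M.size, ∀ j < M.size, ∀ k < M.size,
    M.accBit i j → M.accBit j k → M.accBit i k) ∧
  (∀ i < M.size, ∀ j < M.size, M.accBit i j → M.leBit i j ∧ ¬ M.leBit j i)

theorem isLC_iff : M.IsLC ↔ IsLCModel M.Le M.Acc M.Val := by
  constructor
  · rintro ⟨h₁, h₂, h₃, h₄, h₅, h₆⟩
    have r_trans {i j k : Fin M.size} (hij : M.Acc i j) (hjk : M.Acc j k) : M.Acc i k :=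
      h₅ i i.2 j j.2 k k.2 hij hjk
    have : IsTrans _ (flip M.Acc) := ⟨fun _ _ _ h h' => r_trans h' h⟩
    have : Std.Irrefl (flip M.Acc) :=
      ⟨fun i hii => (h₆ i i.2 i i.2 hii).2 (h₆ i i.2 i i.2 hii).1⟩
    refine ⟨fun i => h₁ i i.2, fun {i j k} => h₂ i i.2 j j.2 k k.2,
      fun {i j k} => h₃ i i.2 j j.2 k k.2, fun {i j n} hij hn => ?_, r_trans,
      fun {i j} hij => (h₆ i i.2 j j.2 hij).1, Finite.wellFounded_of_trans_of_irrefl _⟩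
    by_cases hnv : n < M.val
    · exact h₄ i i.2 j j.2 n hnv hij hn
    · simp [Val, M.valBit_eq_false (not_lt.1 hnv)] at hn
  · intro hM
    refine ⟨fun i hi => hM.le_refl ⟨i, hi⟩,
      fun i hi j hj k hk => @hM.le_trans ⟨i, hi⟩ ⟨j, hj⟩ ⟨k, hk⟩,
      fun i hi j hj k hk => @hM.le_r ⟨i, hi⟩ ⟨j, hj⟩ ⟨k, hk⟩,
      fun i hi j hj n _ => @hM.mono ⟨i, hi⟩ ⟨j, hj⟩ n,
      fun i hi j hj k hk => @hM.r_trans ⟨i, hi⟩ ⟨j, hj⟩ ⟨k, hk⟩,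
      fun i hi j hj hij => ⟨@hM.r_le ⟨i, hi⟩ ⟨j, hj⟩ hij, fun hji => ?_⟩⟩
    -- `R` is irreflexive by well-foundedness, but `j ≤ i R j` would give `j R j`.
    exact hM.r_wf.irrefl.irrefl _ (@hM.le_r ⟨j, hj⟩ ⟨i, hi⟩ ⟨j, hj⟩ hji hij)

/-- Whether the formula with code `x` holds at world `w`, given the truth values `rs` of the
formulas coded by `children x`, each as a list indexed by the worlds. -/
def Holds (x : ℕ) (rs : List (List Bool)) (w : ℕ) : Prop :=
  let tag := x.unpair.1
  let sat (i v : ℕ) : Prop := (rs.getD i []).getD v false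
  (tag = 0 ∧ M.valBit w x.unpair.2) ∨
  (tag = 2 ∧ sat 0 w ∧ sat 1 w) ∨
  (tag = 3 ∧ (sat 0 w ∨ sat 1 w)) ∨
  (tag = 4 ∧ ∀ v < M.size, M.leBit w v → sat 0 v → sat 1 v) ∨
  (tag = 5 ∧ ∀ v < M.size, M.accBit w v → sat 0 v)

instance (x : ℕ) (rs : List (List Bool)) : DecidablePred (M.Holds x rs) := fun _ => by
  unfold Holds; infer_instance

def eval (M : FinModelCode) (x : ℕ) : List Bool :=
  (List.range M.size).map fun w =>
    decide (M.Holds x ((children x).attach.map fun y => M.eval y.1) w)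
termination_by x
decreasing_by exact lt_of_mem_children y.2

theorem eval_eq (x : ℕ) :
    M.eval x = (List.range M.size).map fun w => decide (M.Holds x ((children x).map M.eval) w) := by
  rw [eval]
  simp

theorem getD_eval {x w : ℕ} (hw : w < M.size) :
    (M.eval x).getD w false = decide (M.Holds x ((children x).map M.eval) w) := by
  rw [eval_eq]
  simp [List.getD_eq_getElem?_getD, hw]

theorem getD_eval_encodeForm_iff (A : Form) (w : Fin M.size) :
    (M.eval (encodeForm A)).getD w false ↔ Forces M.Le M.Acc M.Val A w := by
  induction A generalizing w with
  | var n | bot => rw [getD_eval M w.2]; simp [Holds, children, encodeForm, Forces, Val]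
  | and A B ihA ihB | or A B ihA ihB | imp A B ihA ihB =>
    rw [getD_eval M w.2]
    simp [Holds, children, encodeForm, Forces, Le, Fin.forall_iff, ← ihA, ← ihB,
      List.getD_cons_zero, List.getD_cons_succ, -List.getD_eq_getElem?_getD]
  | box A ihA =>
    rw [getD_eval M w.2]
    simp [Holds, children, encodeForm, Forces, Acc, Fin.forall_iff, ← ihA,
      List.getD_cons_zero, -List.getD_eq_getElem?_getD]

theorem exists_le_acc_val_eq {m N : ℕ} (le r : Fin m → Fin m → Prop)
    (V : Fin m → ℕ → Prop) (hV : ∀ w n, V w n → n < N) :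
    ∃ a < 2 ^ (N + m) ^ 2, ∃ b < 2 ^ (N + m) ^ 2, ∃ c < 2 ^ (N + m) ^ 2,
      (mk m a b c).Le = le ∧ (mk m a b c).Acc = r ∧ (mk m a b c).Val = V := by
  have pair_lt {i j : ℕ} (hi : i < N + m) (hj : j < N + m) : Nat.pair i j < (N + m) ^ 2 :=
    (Nat.pair_lt_max_add_one_sq i j).trans_le (Nat.pow_le_pow_left (by omega) 2)
  have code_rel (R : Fin m → Fin m → Prop) : ∃ a < 2 ^ (N + m) ^ 2,
      ∀ i j : Fin m, a.testBit (Nat.pair i j) = true ↔ R i j := by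
    obtain ⟨a, ha, hbits⟩ :=
      exists_testBit_iff (fun x => ∃ i j : Fin m, Nat.pair i j = x ∧ R i j)
        (by rintro _ ⟨i, j, rfl, -⟩; exact pair_lt (by omega) (by omega))
    exact ⟨a, ha, fun i j => by simp [hbits, Nat.pair_eq_pair, Fin.val_inj]⟩
  obtain ⟨a, ha, hle⟩ := code_rel le
  obtain ⟨b, hb, hr⟩ := code_rel r
  obtain ⟨c, hc, hval⟩ :=
    exists_testBit_iff (fun x => ∃ (n : ℕ) (w : Fin m), Nat.pair n w = x ∧ V w n)
      (by rintro _ ⟨n, w, rfl, hn⟩; exact pair_lt (by have := hV w n hn; omega) (by omega))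
  refine ⟨a, ha, b, hb, c, hc, ?_, ?_, ?_⟩ <;> ext
  · exact hle _ _
  · exact hr _ _
  · simp [Val, valBit, hval, Nat.pair_eq_pair, Fin.val_inj]

end FinModelCode

/-- A formula with code `n` has at most `n + 1` subformulas, so its canonical countermodel has
`m < 2 ^ (n + 2)` worlds and is coded by numbers below `2 ^ (n + 1 + m) ^ 2`. -/
def ValidCode (n : ℕ) : Prop :=
  ∀ m < 2 ^ (n + 2), ∀ a < 2 ^ (n + 1 + m) ^ 2, ∀ b < 2 ^ (n + 1 + m) ^ 2,
    ∀ c < 2 ^ (n + 1 + m) ^ 2, (FinModelCode.mk m a b c).IsLC →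
      ∀ w < m, (FinModelCode.mk m a b c).eval n |>.getD w false

theorem validCode_of_provable {A : Form} (h : LCProves A) : ValidCode (encodeForm A) :=
  fun _ _ _ _ _ _ _ _ hM w hw => (FinModelCode.getD_eval_encodeForm_iff _ A ⟨w, hw⟩).2
    (forces_of_provable h ((FinModelCode.isLC_iff _).1 hM) _)

theorem provable_of_validCode {A : Form} (h : ValidCode (encodeForm A)) : LCProves A := by
  by_contra hA
  obtain ⟨Γ, hΓ⟩ := PrimeTheory.exists_not_forces hA
  let e := (Finite.equivFin (PrimeTheory (subformulas A))).symm
  set m := Nat.card (PrimeTheory (subformulas A))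
  have hV (w : Fin _) (n : ℕ) (hn : PrimeTheory.Val (e w) n) : n < encodeForm A + 1 :=
    Nat.lt_succ_of_le <| (Nat.right_le_pair 0 n).trans <|
      encodeForm_le_of_mem_subformulas ((e w).2.subset hn)
  obtain ⟨a, ha, b, hb, c, hc, hle, hr, hval⟩ := FinModelCode.exists_le_acc_val_eq
    (fun i j => PrimeTheory.Le (e i) (e j)) (fun i j => PrimeTheory.Acc (e i) (e j))
    (fun w => PrimeTheory.Val (e w)) hV
  have hm : m < 2 ^ (encodeForm A + 2) :=
    PrimeTheory.card_le.trans_lt <| Nat.pow_lt_pow_right one_lt_two <|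
      Nat.lt_succ_of_le (card_subformulas_le A)
  have hM : (FinModelCode.mk m a b c).IsLC := by
    rw [FinModelCode.isLC_iff, hle, hr, hval]
    exact PrimeTheory.isLCModel.comap e
  have hforces := (FinModelCode.getD_eval_encodeForm_iff ⟨m, a, b, c⟩ A (e.symm Γ)).1
    (h m hm a ha b hb c hc hM (e.symm Γ) (e.symm Γ).2)
  rw [hle, hr, hval, forces_comap_equiv, e.apply_symm_apply] at hforces
  exact hΓ hforces

theorem provable_iff_validCode (A : Form) : LCProves A ↔ ValidCode (encodeForm A) :=
  ⟨validCode_of_provable, provable_of_validCode⟩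

end Codes

section Computability

open Primrec

variable {α : Type*} [Primcodable α]

theorem primrec_pow : Primrec₂ ((· ^ ·) : ℕ → ℕ → ℕ) :=
  Primrec₂.unpaired'.1 Nat.Primrec.pow

theorem primrec_testBit : Primrec₂ Nat.testBit :=
  (Primrec.eq.comp (nat_mod.comp (nat_div.comp fst (primrec_pow.comp (const 2) snd)) (const 2))
    (const 1)).decide.of_eq fun _ => Nat.testBit_eq_decide_div_mod_eq.symm

theorem primrecPred_imp {p q : α → Prop} (hp : PrimrecPred p) (hq : PrimrecPred q) :
    PrimrecPred fun a => p a → q a :=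
  (hp.not.or hq).of_eq fun _ => imp_iff_not_or.symm

theorem primrecPred_forall_lt {f : α → ℕ} {p : α → ℕ → Prop} (hf : Primrec f)
    (hp : PrimrecRel p) : PrimrecPred fun a => ∀ x < f a, p a x :=
  (hp.swap.forall_mem_list.comp (list_range.comp hf) Primrec.id).of_eq fun _ => by simp

theorem primrecPred_bool {f : α → Bool} (hf : Primrec f) : PrimrecPred fun a => f a = true :=
  Primrec.eq.comp hf (const true)

namespace FinModelCode

def equivProd : FinModelCode ≃ ℕ × ℕ × ℕ × ℕ where
  toFun M := (M.size, M.le, M.acc, M.val)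
  invFun p := ⟨p.1, p.2.1, p.2.2.1, p.2.2.2⟩
  left_inv _ := rfl
  right_inv _ := rfl

instance : Primcodable FinModelCode := Primcodable.ofEquiv _ equivProd

theorem primrec_equivProd : Primrec equivProd := of_equiv

theorem primrec_mk : Primrec fun p : ℕ × ℕ × ℕ × ℕ => mk p.1 p.2.1 p.2.2.1 p.2.2.2 :=
  of_equiv_symm (e := equivProd)

theorem primrec_size : Primrec size := fst.comp primrec_equivProd

theorem primrec_val : Primrec val := snd.comp (snd.comp (snd.comp primrec_equivProd))

variable {M : α → FinModelCode} {i j : α → ℕ}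

theorem primrec_leBit (hM : Primrec M) (hi : Primrec i) (hj : Primrec j) :
    Primrec fun a => (M a).leBit (i a) (j a) :=
  primrec_testBit.comp ((fst.comp snd).comp (primrec_equivProd.comp hM))
    (Primrec₂.natPair.comp hi hj)

theorem primrec_accBit (hM : Primrec M) (hi : Primrec i) (hj : Primrec j) :
    Primrec fun a => (M a).accBit (i a) (j a) :=
  primrec_testBit.comp ((fst.comp (snd.comp snd)).comp (primrec_equivProd.comp hM))
    (Primrec₂.natPair.comp hi hj)

theorem primrec_valBit (hM : Primrec M) (hi : Primrec i) (hj : Primrec j) :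
    Primrec fun a => (M a).valBit (i a) (j a) :=
  primrec_testBit.comp (primrec_val.comp hM) (Primrec₂.natPair.comp hj hi)

theorem primrecPred_isLC : PrimrecPred IsLC := by
  have hM₁ : Primrec fun q : FinModelCode × ℕ => q.1 := fst
  have hM₂ : Primrec fun q : (FinModelCode × ℕ) × ℕ => q.1.1 := fst.comp fst
  have hM₃ : Primrec fun q : ((FinModelCode × ℕ) × ℕ) × ℕ => q.1.1.1 :=
    fst.comp (fst.comp fst)
  have hi₂ : Primrec fun q : (FinModelCode × ℕ) × ℕ => q.1.2 := snd.comp fst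
  have hi₃ : Primrec fun q : ((FinModelCode × ℕ) × ℕ) × ℕ => q.1.1.2 :=
    snd.comp (fst.comp fst)
  have hj₃ : Primrec fun q : ((FinModelCode × ℕ) × ℕ) × ℕ => q.1.2 := snd.comp fst
  have forall_lt₃ {f : FinModelCode → ℕ} {p : FinModelCode → ℕ → ℕ → ℕ → Prop}
      (hf : Primrec f)
      (hp : PrimrecPred fun q : ((FinModelCode × ℕ) × ℕ) × ℕ =>
        p q.1.1.1 q.1.1.2 q.1.2 q.2) :
      PrimrecPred fun M => ∀ i < M.size, ∀ j < M.size, ∀ k < f M, p M i j k :=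
    primrecPred_forall_lt primrec_size <| primrecPred_forall_lt (primrec_size.comp fst) <|
      primrecPred_forall_lt (hf.comp (fst.comp fst)) hp
  unfold IsLC
  refine .and ?_ <| .and ?_ <| .and ?_ <| .and ?_ <| .and ?_ ?_
  · exact primrecPred_forall_lt primrec_size (primrecPred_bool (primrec_leBit hM₁ snd snd))
  · exact forall_lt₃ primrec_size <|
      primrecPred_imp (primrecPred_bool (primrec_leBit hM₃ hi₃ hj₃)) <|
        primrecPred_imp (primrecPred_bool (primrec_leBit hM₃ hj₃ snd))
          (primrecPred_bool (primrec_leBit hM₃ hi₃ snd))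
  · exact forall_lt₃ primrec_size <|
      primrecPred_imp (primrecPred_bool (primrec_leBit hM₃ hi₃ hj₃)) <|
        primrecPred_imp (primrecPred_bool (primrec_accBit hM₃ hj₃ snd))
          (primrecPred_bool (primrec_accBit hM₃ hi₃ snd))
  · exact forall_lt₃ primrec_val <|
      primrecPred_imp (primrecPred_bool (primrec_leBit hM₃ hi₃ hj₃)) <|
        primrecPred_imp (primrecPred_bool (primrec_valBit hM₃ hi₃ snd))
          (primrecPred_bool (primrec_valBit hM₃ hj₃ snd))
  · exact forall_lt₃ primrec_size <|
      primrecPred_imp (primrecPred_bool (primrec_accBit hM₃ hi₃ hj₃)) <|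
        primrecPred_imp (primrecPred_bool (primrec_accBit hM₃ hj₃ snd))
          (primrecPred_bool (primrec_accBit hM₃ hi₃ snd))
  · exact primrecPred_forall_lt primrec_size <| primrecPred_forall_lt (primrec_size.comp fst) <|
      primrecPred_imp (primrecPred_bool (primrec_accBit hM₂ hi₂ snd)) <|
        (primrecPred_bool (primrec_leBit hM₂ hi₂ snd)).and
          (primrecPred_bool (primrec_leBit hM₂ snd hi₂)).not

theorem primrec_children : Primrec children := by
  have tag : Primrec fun x : ℕ => x.unpair.1 := fst.comp unpair
  have body : Primrec fun x : ℕ => x.unpair.2 := snd.comp unpair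
  exact Primrec.ite (Primrec.eq.comp tag (const 5)) (list_cons.comp body (const []))
    (Primrec.ite (nat_le.comp (const 2) tag)
      (list_cons.comp (fst.comp (unpair.comp body))
        (list_cons.comp (snd.comp (unpair.comp body)) (const [])))
      (const []))

theorem primrecPred_holds : PrimrecPred fun q : (FinModelCode × ℕ × List (List Bool)) × ℕ =>
    q.1.1.Holds q.1.2.1 q.1.2.2 q.2 := by
  have hM : Primrec fun q : (FinModelCode × ℕ × List (List Bool)) × ℕ => q.1.1 :=
    fst.comp fst
  have hx : Primrec fun q : (FinModelCode × ℕ × List (List Bool)) × ℕ => q.1.2.1 :=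
    fst.comp (snd.comp fst)
  have hrs : Primrec fun q : (FinModelCode × ℕ × List (List Bool)) × ℕ => q.1.2.2 :=
    snd.comp (snd.comp fst)
  have tag (k : ℕ) : PrimrecPred fun q : (FinModelCode × ℕ × List (List Bool)) × ℕ =>
      q.1.2.1.unpair.1 = k :=
    Primrec.eq.comp (fst.comp (unpair.comp hx)) (const k)
  have sat {β : Type} [Primcodable β] {rs : β → List (List Bool)} {v : β → ℕ} (i : ℕ)
      (hrs : Primrec rs) (hv : Primrec v) :
      PrimrecPred fun b => ((rs b).getD i []).getD (v b) false = true :=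
    primrecPred_bool ((list_getD false).comp ((list_getD []).comp hrs (const i)) hv)
  refine ((tag 0).and ?_).or <| ((tag 2).and ((sat 0 hrs snd).and (sat 1 hrs snd))).or <|
    ((tag 3).and ((sat 0 hrs snd).or (sat 1 hrs snd))).or <| ((tag 4).and ?_).or ((tag 5).and ?_)
  · exact primrecPred_bool (primrec_valBit hM snd (snd.comp (unpair.comp hx)))
  · exact primrecPred_forall_lt (primrec_size.comp hM) <|
      primrecPred_imp (primrecPred_bool (primrec_leBit (hM.comp fst) (snd.comp fst) snd)) <|
        primrecPred_imp (sat 0 (hrs.comp fst) snd) (sat 1 (hrs.comp fst) snd)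
  · exact primrecPred_forall_lt (primrec_size.comp hM) <|
      primrecPred_imp (primrecPred_bool (primrec_accBit (hM.comp fst) (snd.comp fst) snd))
        (sat 0 (hrs.comp fst) snd)

theorem primrec_eval : Primrec₂ eval :=
  nat_omega_rec eval (m := fun _ x => x) (l := fun _ x => children x)
    (g := fun M p => some ((List.range M.size).map fun w => decide (M.Holds p.1 p.2 w)))
    Primrec₂.right (primrec_children.comp₂ Primrec₂.right)
    (option_some.comp (list_map (list_range.comp (primrec_size.comp fst))
      primrecPred_holds.decide))
    (fun _ _ _ => lt_of_mem_children) (fun M x => by rw [eval_eq M x])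

end FinModelCode

theorem primrecPred_validCode : PrimrecPred ValidCode := by
  have bound : Primrec fun q : ℕ × ℕ => 2 ^ (q.1 + 1 + q.2) ^ 2 :=
    primrec_pow.comp (const 2) (primrec_pow.comp (nat_add.comp (nat_add.comp fst (const 1)) snd)
      (const 2))
  refine primrecPred_forall_lt (primrec_pow.comp (const 2) (nat_add.comp .id (const 2))) <|
    primrecPred_forall_lt bound <| primrecPred_forall_lt (bound.comp fst) <|
      primrecPred_forall_lt (bound.comp (fst.comp fst)) ?_
  have hn : Primrec fun q : (((ℕ × ℕ) × ℕ) × ℕ) × ℕ => q.1.1.1.1 :=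
    fst.comp (fst.comp (fst.comp fst))
  have hm : Primrec fun q : (((ℕ × ℕ) × ℕ) × ℕ) × ℕ => q.1.1.1.2 :=
    snd.comp (fst.comp (fst.comp fst))
  have hM : Primrec fun q : (((ℕ × ℕ) × ℕ) × ℕ) × ℕ =>
      FinModelCode.mk q.1.1.1.2 q.1.1.2 q.1.2 q.2 :=
    FinModelCode.primrec_mk.comp
      (hm.pair ((snd.comp (fst.comp fst)).pair ((snd.comp fst).pair snd)))
  exact primrecPred_imp (FinModelCode.primrecPred_isLC.comp hM) <| primrecPred_forall_lt hm <|
    primrecPred_bool ((list_getD false).comp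
      (FinModelCode.primrec_eval.comp (hM.comp fst) (hn.comp fst)) snd)

end Computability

end LC

/-- the theory LC is decidable (computably decidable under a Gödel
numbering of modal formulas). -/
theorem LC_decidable :
    ∃ f : ℕ → Bool, Computable f ∧ ∀ A : Form, (LCProves A ↔ f (encodeForm A) = true) := by
  classical
  exact ⟨fun n => decide (LC.ValidCode n), LC.primrecPred_validCode.decide.to_comp,
    fun A => by simp [LC.provable_iff_validCode]⟩

end PLHA
end

section
/- LC + □⊥ is conservative over IPC in the non-modal language: for every non-modal proposition A, if LC + □⊥ ⊢ A then IPC ⊢ A. -/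
namespace PLHA

/-- Translation erasing boxes: □B ↦ ⊤. -/
def erase : Form → Form
  | .var n => .var n
  | .bot => .bot
  | .and A B => .and (erase A) (erase B)
  | .or A B => .or (erase A) (erase B)
  | .imp A B => .imp (erase A) (erase B)
  | .box _ => Form.top

lemma ipc_id (A : Form) : IPCbProves (.imp A A) := by
  have h1 : IPCbProves (.imp (.imp A (.imp (.imp A A) A)) (.imp (.imp A (.imp A A)) (.imp A A))) :=
    .ipc (IpcAx.a2 A (.imp A A) A)
  exact (h1.mp (.ipc (IpcAx.a1 A (.imp A A)))).mp (.ipc (IpcAx.a1 A A))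

lemma ipc_top : IPCbProves Form.top := ipc_id .bot

lemma ipc_imp_top (A : Form) : IPCbProves (.imp A Form.top) :=
  (Proves.ipc (IpcAx.a1 Form.top A)).mp ipc_top

lemma erase_ipcax {A : Form} (h : IpcAx A) : IpcAx (erase A) := by
  cases h <;> simp only [erase] <;> constructor

lemma erase_boxFree : ∀ A : Form, A.boxFree = true → erase A = A := by
  intro A hA
  induction A with
  | var n => rfl
  | bot => rfl
  | and B C ihB ihC =>
      simp [Form.boxFree, Bool.and_eq_true] at hA
      simp [erase, ihB hA.1, ihC hA.2]
  | or B C ihB ihC =>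
      simp [Form.boxFree, Bool.and_eq_true] at hA
      simp [erase, ihB hA.1, ihC hA.2]
  | imp B C ihB ihC =>
      simp [Form.boxFree, Bool.and_eq_true] at hA
      simp [erase, ihB hA.1, ihC hA.2]
  | box B ih => simp [Form.boxFree] at hA

lemma erase_proves {A : Form}
    (h : Proves (fun F => (GLAx F ∨ CPAx F) ∨ F = Form.box Form.bot) true A) :
    IPCbProves (erase A) := by
  induction h with
  | ax hax =>
      rcases hax with (hgl | hcp) | hbb
      · cases hgl with
        | k => exact .ipc (IpcAx.a1 Form.top Form.top)
        | four => exact ipc_id Form.top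
        | lob => exact ipc_imp_top _
      · obtain ⟨B, rfl⟩ := hcp
        exact ipc_imp_top _
      · subst hbb; exact ipc_top
  | ipc hax => exact .ipc (erase_ipcax hax)
  | mp _ _ ih1 ih2 => exact ih1.mp ih2
  | nec _ _ _ => exact ipc_top

/-- LC + □⊥ is conservative over IPC in the non-modal language. -/
theorem LC_boxbot_conservative_over_IPC (A : Form) (hA : A.boxFree = true)
    (h : Proves (fun F => (GLAx F ∨ CPAx F) ∨ F = Form.box Form.bot) true A) :
    IPCbProves A := by
  have := erase_proves h
  rwa [erase_boxFree A hA] at this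

end PLHA
end
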